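/- arXiv:1608.06458 — 6 statements merged into one kernel-verified Lean document; each statement's English description precedes it below -/
import Mathlib

section
/- Every n-vertex graph admitting a layered ℓ-separator (for some layering) has stack-number at most 5ℓ · log₂ n. -/
/-- `lay` is a layering of `G`: every edge joins vertices in the same layer
or in consecutive layers. -/
def IsLayering {V : Type*} (G : SimpleGraph V) (lay : V → ℕ) : Prop :=
  ∀ u v : V, G.Adj u v →
    lay u = lay v ∨ lay u + 1 = lay v ∨ lay v + 1 = lay u

/-- `G` has a layered `ℓ`-separator with respect to the layering `lay`: every
subgraph `G'` of `G` contains a set `S` with at most `ℓ` vertices in each layer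
such that every connected component of `G' − S` has at most `|V(G')| / 2`
vertices. -/
def HasLayeredSeparator {V : Type*} (G : SimpleGraph V) (lay : V → ℕ) (ℓ : ℕ) : Prop :=
  ∀ G' : G.Subgraph, ∃ S ⊆ G'.verts,
    (∀ i : ℕ, (S ∩ {v | lay v = i}).ncard ≤ ℓ) ∧
    ∀ c : ((G'.deleteVerts S).coe).ConnectedComponent,
      2 * c.supp.ncard ≤ G'.verts.ncard

/-- `G` has a stack layout with `s` stacks: an injective position function on
the vertices and an assignment of the edges to `s` stacks such that no two
edges in the same stack cross. -/
def HasStackLayout {V : Type*} (G : SimpleGraph V) (s : ℕ) : Prop :=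
  ∃ (pos : V → ℕ) (f : Sym2 V → ℕ), Function.Injective pos ∧
    (∀ v w : V, G.Adj v w → f s(v, w) < s) ∧
    (∀ v w x y : V, G.Adj v w → G.Adj x y → f s(v, w) = f s(x, y) →
      ¬ (pos v < pos x ∧ pos x < pos w ∧ pos w < pos y))

/-- `G` has a queue layout with `q` queues: an injective position function on
the vertices and an assignment of the edges to `q` queues such that no two
edges in the same queue nest. -/
def HasQueueLayout {V : Type*} (G : SimpleGraph V) (q : ℕ) : Prop :=
  ∃ (pos : V → ℕ) (f : Sym2 V → ℕ), Function.Injective pos ∧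
    (∀ v w : V, G.Adj v w → f s(v, w) < q) ∧
    (∀ v w x y : V, G.Adj v w → G.Adj x y → f s(v, w) = f s(x, y) →
      ¬ (pos v < pos x ∧ pos x < pos y ∧ pos y < pos w))

/-!
Recursive splitting along layered separators gives a separation tree of depth at most `log₂ n`:
every vertex gets the address of the tree node whose separator contains it, and a slot `< ℓ`
numbering it among the vertices of that separator in its layer. Vertices are ordered layer by
layer, and inside a layer lexicographically by (address, slot), increasingly on even layers and
decreasingly on odd ones. An edge is put on a stack determined by the depth and the slot of its
endpoint nearer to the root, and by one of five classes: inside a layer, or between layers `i`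
and `i + 1`, split by the parity of `i` and by which of the two endpoints is nearer to the root.
Two edges on the same stack then hang below distinct tree nodes of the same depth, so their
addresses are lexicographically separated, and the alternating directions forbid a crossing.
-/

theorem List.Lex.append_of_length_eq {α : Type*} {r : α → α → Prop} {l₁ l₂ : List α}
    (h : List.Lex r l₁ l₂) (hl : l₁.length = l₂.length) (s t : List α) :
    List.Lex r (l₁ ++ s) (l₂ ++ t) := by
  induction h with
  | nil => simp at hl
  | cons _ ih => exact .cons (ih (by simpa using hl))
  | rel h => exact .rel h

theorem List.lt_of_lt_of_prefix {α : Type*} [LinearOrder α] {l₁ l₂ p q : List α}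
    (h : l₁ < l₂) (hl : l₁.length = l₂.length) (hp : l₁ <+: p) (hq : l₂ <+: q) : p < q := by
  obtain ⟨s, rfl⟩ := hp
  obtain ⟨t, rfl⟩ := hq
  exact List.Lex.append_of_length_eq h hl s t

theorem Nat.eq_and_eq_of_mul_add_eq {L A B i j : ℕ} (hi : i < L) (hj : j < L)
    (h : L * A + i = L * B + j) : A = B ∧ i = j := by
  have hL : 0 < L := by omega
  have hdiv := congrArg (· / L) h
  have hmod := congrArg (· % L) h
  simp only [Nat.mul_add_div hL, Nat.div_eq_of_lt hi, Nat.div_eq_of_lt hj,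
    Nat.mul_add_mod, Nat.mod_eq_of_lt hi, Nat.mod_eq_of_lt hj] at hdiv hmod
  omega

theorem exists_injective_nat_lt_iff {α β : Type*} [Finite α] [LinearOrder β] {f : α → β}
    (hf : Function.Injective f) :
    ∃ pos : α → ℕ, Function.Injective pos ∧ ∀ a b, pos a < pos b ↔ f a < f b := by
  let : LinearOrder α := LinearOrder.lift' f hf
  have := Fintype.ofFinite α
  let e := Fintype.orderIsoFinOfCardEq α rfl
  exact ⟨fun a => e.symm a, fun a b h => e.symm.injective (Fin.ext h),
    fun a b => e.symm.lt_iff_lt⟩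

theorem Set.Finite.exists_lt_injOn_fibers {V : Type*} {S : Set V} (hS : S.Finite)
    (lay : V → ℕ) {ℓ : ℕ} (h : ∀ i, (S ∩ {v | lay v = i}).ncard ≤ ℓ) :
    ∃ g : V → ℕ, (∀ v ∈ S, g v < ℓ) ∧
      ∀ a ∈ S, ∀ b ∈ S, lay a = lay b → g a = g b → a = b := by
  have hfib (i : ℕ) : ∃ g : V → ℕ, S ∩ {v | lay v = i} ⊆ g ⁻¹' Set.Iio ℓ ∧
      Set.InjOn g (S ∩ {v | lay v = i}) := by
    have hfin := hS.inter_of_left {v | lay v = i}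
    refine hfin.exists_injOn_of_encard_le ?_
    rw [← hfin.cast_ncard_eq, ← (Set.finite_Iio ℓ).cast_ncard_eq, Set.ncard_Iio_nat]
    exact_mod_cast h i
  choose g hg_lt hg_inj using hfib
  exact ⟨fun v => g (lay v) v, fun v hv => hg_lt (lay v) ⟨hv, rfl⟩,
    fun a ha b hb hab hg => hg_inj (lay a) ⟨ha, rfl⟩ ⟨hb, hab.symm⟩ (by simpa [hab] using hg)⟩

open SimpleGraph

structure IsSeparationAddressing {V : Type*} {G : SimpleGraph V} (H : G.Subgraph)
    (lay : V → ℕ) (ℓ : ℕ) (addr : V → List ℕ) (slot : V → ℕ) : Prop where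
  slot_lt : ∀ v ∈ H.verts, slot v < ℓ
  injOn : ∀ a ∈ H.verts, ∀ b ∈ H.verts,
    addr a = addr b → lay a = lay b → slot a = slot b → a = b
  prefix_or_prefix : ∀ a b, H.Adj a b → addr a <+: addr b ∨ addr b <+: addr a
  two_pow_le : ∀ a b, H.Adj a b → 2 ^ (min (addr a).length (addr b).length + 1) ≤ H.verts.ncard

section Addressing

variable {V : Type*} {G : SimpleGraph V} {lay : V → ℕ} {ℓ : ℕ}

theorem HasLayeredSeparator.exists_partition [Finite V] (hsep : HasLayeredSeparator G lay ℓ)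
    (H : G.Subgraph) :
    ∃ S : Set V, (∀ i, (S ∩ {v | lay v = i}).ncard ≤ ℓ) ∧ ∃ part : V → ℕ,
      (∀ a b, H.Adj a b → a ∉ S → b ∉ S → part a = part b) ∧
      ∀ k, 2 * (H.verts \ S ∩ {v | part v = k}).ncard ≤ H.verts.ncard := by
  classical
  obtain ⟨S, -, hS_lay, hS_comp⟩ := hsep H
  set H' := H.deleteVerts S
  obtain ⟨cidx, hcidx⟩ := exists_injective_nat H'.coe.ConnectedComponent
  let comp (v : V) (hv : v ∈ H'.verts) := H'.coe.connectedComponentMk ⟨v, hv⟩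
  let part (v : V) : ℕ := if hv : v ∈ H'.verts then cidx (comp v hv) else 0
  have part_eq {v : V} (hv : v ∈ H'.verts) : part v = cidx (comp v hv) := dif_pos hv
  refine ⟨S, hS_lay, part, ?_, fun k => ?_⟩
  · intro a b hab ha hb
    have ha' : a ∈ H'.verts := ⟨H.edge_vert hab, ha⟩
    have hb' : b ∈ H'.verts := ⟨H.edge_vert hab.symm, hb⟩
    rw [part_eq ha', part_eq hb']
    congr 1
    refine ConnectedComponent.eq.mpr (Adj.reachable ?_)
    simpa [H', ha, hb, H.edge_vert hab, H.edge_vert hab.symm] using hab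
  rcases (H.verts \ S ∩ {v | part v = k}).eq_empty_or_nonempty with h | ⟨v₀, hv₀, hk⟩
  · simp [h]
  have hsub : H.verts \ S ∩ {v | part v = k} ⊆ Subtype.val '' (comp v₀ hv₀).supp := by
    rintro v ⟨hv, hvk⟩
    refine ⟨⟨v, hv⟩, ?_, rfl⟩
    rw [ConnectedComponent.mem_supp_iff]
    exact hcidx (by rw [← part_eq hv, ← part_eq hv₀]; exact hvk.trans hk.symm)
  calc 2 * (H.verts \ S ∩ {v | part v = k}).ncard
      ≤ 2 * (Subtype.val '' (comp v₀ hv₀).supp).ncard := by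
        gcongr 2 * ?_
        exact Set.ncard_le_ncard hsub (Set.toFinite _)
    _ = 2 * (comp v₀ hv₀).supp.ncard := by
        rw [Set.ncard_image_of_injective _ Subtype.val_injective]
    _ ≤ H.verts.ncard := hS_comp _

theorem IsSeparationAddressing.of_verts_eq_empty {H : G.Subgraph} (hH : H.verts = ∅)
    (addr : V → List ℕ) (slot : V → ℕ) : IsSeparationAddressing H lay ℓ addr slot where
  slot_lt v hv := by simp [hH] at hv
  injOn a ha := by simp [hH] at ha
  prefix_or_prefix a b hab := by simpa [hH] using H.edge_vert hab
  two_pow_le a b hab := by simpa [hH] using H.edge_vert hab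

theorem IsSeparationAddressing.of_separator [Finite V] {H : G.Subgraph} {S : Set V}
    [DecidablePred (· ∈ S)]
    {slotS : V → ℕ} (hslotS_lt : ∀ v ∈ S, slotS v < ℓ)
    (hslotS_inj : ∀ a ∈ S, ∀ b ∈ S, lay a = lay b → slotS a = slotS b → a = b)
    {part : V → ℕ} (hpart : ∀ a b, H.Adj a b → a ∉ S → b ∉ S → part a = part b)
    (hsmall : ∀ k, 2 * (H.verts \ S ∩ {v | part v = k}).ncard ≤ H.verts.ncard)
    {addr : ℕ → V → List ℕ} {slot : ℕ → V → ℕ}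
    (h : ∀ k, IsSeparationAddressing (H.induce (H.verts \ S ∩ {v | part v = k})) lay ℓ
      (addr k) (slot k)) :
    IsSeparationAddressing H lay ℓ
      (fun v => if v ∈ S then [] else part v :: addr (part v) v)
      (fun v => if v ∈ S then slotS v else slot (part v) v) := by
  have mem_part {v : V} (hv : v ∈ H.verts) (hvS : v ∉ S) :
      v ∈ (H.induce (H.verts \ S ∩ {v | part v = part v})).verts := ⟨⟨hv, hvS⟩, rfl⟩
  have adj_part {a b : V} (hab : H.Adj a b) (ha : a ∉ S) (hb : b ∉ S) :
      (H.induce (H.verts \ S ∩ {v | part v = part a})).Adj a b :=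
    ⟨⟨⟨H.edge_vert hab, ha⟩, rfl⟩, ⟨⟨H.edge_vert hab.symm, hb⟩, (hpart a b hab ha hb).symm⟩, hab⟩
  constructor
  · intro v hv
    by_cases hvS : v ∈ S
    · simpa [hvS] using hslotS_lt v hvS
    · simpa [hvS] using (h _).slot_lt v (mem_part hv hvS)
  · intro a ha b hb haddr hlay hslot
    by_cases haS : a ∈ S <;> by_cases hbS : b ∈ S <;>
      simp only [haS, hbS, if_true, if_false, reduceCtorEq, List.cons.injEq] at haddr hslot
    · exact hslotS_inj a haS b hbS hlay hslot
    · obtain ⟨hpart_eq, haddr⟩ := haddr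
      refine (h (part a)).injOn a (mem_part ha haS) b ⟨⟨hb, hbS⟩, hpart_eq.symm⟩ ?_ hlay ?_
      · simpa [hpart_eq] using haddr
      · simpa [hpart_eq] using hslot
  · intro a b hab
    by_cases haS : a ∈ S
    · simp [haS]
    by_cases hbS : b ∈ S
    · simp [hbS]
    simpa [haS, hbS, hpart a b hab haS hbS] using
      (h (part a)).prefix_or_prefix a b (adj_part hab haS hbS)
  · intro a b hab
    have htwo : 2 ≤ H.verts.ncard := by
      have := (Set.one_lt_ncard (Set.toFinite _)).mpr
        ⟨a, H.edge_vert hab, b, H.edge_vert hab.symm, hab.ne⟩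
      omega
    by_cases haS : a ∈ S
    · simpa [haS] using htwo
    by_cases hbS : b ∈ S
    · simpa [hbS] using htwo
    have hrec := (h (part a)).two_pow_le a b (adj_part hab haS hbS)
    rw [Subgraph.induce_verts] at hrec
    have hba : part b = part a := (hpart a b hab haS hbS).symm
    simp only [haS, hbS, if_false, List.length_cons, hba, Nat.succ_min_succ, pow_succ 2 (_ + 1)]
    calc 2 ^ (min (addr (part a) a).length (addr (part a) b).length + 1) * 2
        ≤ (H.verts \ S ∩ {v | part v = part a}).ncard * 2 := by gcongr
      _ ≤ H.verts.ncard := by linarith [hsmall (part a)]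

theorem HasLayeredSeparator.exists_addressing [Finite V] (hsep : HasLayeredSeparator G lay ℓ)
    (H : G.Subgraph) : ∃ addr slot, IsSeparationAddressing H lay ℓ addr slot := by
  classical
  induction hN : H.verts.ncard using Nat.strong_induction_on generalizing H with
  | _ N ih =>
  obtain ⟨S, hS_lay, part, hpart, hsmall⟩ := hsep.exists_partition H
  obtain ⟨slotS, hslotS_lt, hslotS_inj⟩ := (Set.toFinite S).exists_lt_injOn_fibers lay hS_lay
  have hrec (k : ℕ) : ∃ addr slot, IsSeparationAddressing
      (H.induce (H.verts \ S ∩ {v | part v = k})) lay ℓ addr slot := by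
    rcases (H.verts \ S ∩ {v | part v = k}).eq_empty_or_nonempty with hP | hP
    · exact ⟨_, _, .of_verts_eq_empty hP (fun _ => []) (fun _ => 0)⟩
    refine ih _ ?_ _ rfl
    have := (Set.ncard_pos (Set.toFinite _)).mpr hP
    have := hsmall k
    simp only [Subgraph.induce_verts]
    omega
  choose addr slot h using hrec
  exact ⟨_, _, .of_separator hslotS_lt hslotS_inj hpart hsmall h⟩

end Addressing

def edgeClass (p q : ℕ) : ℕ :=
  if p = q then 4 else 2 * (min p q % 2) + if p < q then 0 else 1

theorem edgeClass_lt_five (p q : ℕ) : edgeClass p q < 5 := by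
  unfold edgeClass; split_ifs <;> omega

section Layout

variable {V : Type*} (lay : V → ℕ) (addr : V → List ℕ) (slot : V → ℕ)

abbrev LayerKey := List ℕ ×ₗ ℕ

/-- The sum type only serves to reverse the order on odd layers: its two summands never meet
inside one layer. -/
def layoutKey (v : V) : ℕ ×ₗ (LayerKey ⊕ₗ LayerKeyᵒᵈ) :=
  toLex (lay v, if Even (lay v) then toLex (.inl (toLex (addr v, slot v)))
    else toLex (.inr (OrderDual.toDual (toLex (addr v, slot v)))))

def edgeStack (ℓ : ℕ) (u o : V) : ℕ :=
  ℓ * (5 * (addr u).length + edgeClass (lay u) (lay o)) + slot u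

/-- The depth term dominates `edgeStack`, so the minimum is attained at an orientation starting
from the endpoint nearer to the root (`length_le_of_edgeStack_le`). -/
def stackOf (ℓ : ℕ) (a b : V) : ℕ :=
  min (edgeStack lay addr slot ℓ a b) (edgeStack lay addr slot ℓ b a)

variable {lay addr slot} {G : SimpleGraph V} {ℓ : ℕ}

theorem lay_le_of_layoutKey_lt {a b : V}
    (h : layoutKey lay addr slot a < layoutKey lay addr slot b) : lay a ≤ lay b := by
  rw [layoutKey, layoutKey, Prod.Lex.toLex_lt_toLex] at h
  omega

theorem layoutKey_lt_iff {a b : V} (hlay : lay a = lay b) (haddr : addr a ≠ addr b) :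
    layoutKey lay addr slot a < layoutKey lay addr slot b ↔
      (Even (lay a) ↔ addr a < addr b) := by
  rw [layoutKey, layoutKey, Prod.Lex.toLex_lt_toLex, ← hlay]
  by_cases he : Even (lay a)
  · simp [he, Prod.Lex.toLex_lt_toLex, haddr]
  · simp [he, Prod.Lex.toLex_lt_toLex, Ne.symm haddr, (Ne.symm haddr).le_iff_lt]

theorem layoutKey_injective
    (hinj : ∀ a b, addr a = addr b → lay a = lay b → slot a = slot b → a = b) :
    Function.Injective (layoutKey lay addr slot) := by
  intro a b h
  rw [layoutKey, layoutKey, toLex_inj, Prod.mk.injEq] at h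
  obtain ⟨hlay, h⟩ := h
  rw [hlay] at h
  split_ifs at h <;>
    simp only [toLex_inj, Sum.inl.injEq, Sum.inr.injEq, OrderDual.toDual_inj, Prod.mk.injEq] at h <;>
    exact hinj a b h.1 hlay h.2

theorem lay_eq_of_edgeClass_eq {v w x y u₁ o₁ u₂ o₂ : V}
    (hvw : lay v = lay w ∨ lay v + 1 = lay w ∨ lay w + 1 = lay v)
    (hxy : lay x = lay y ∨ lay x + 1 = lay y ∨ lay y + 1 = lay x)
    (hvx : lay v ≤ lay x) (hxw : lay x ≤ lay w) (hwy : lay w ≤ lay y)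
    (hu₁ : u₁ = v ∧ o₁ = w ∨ u₁ = w ∧ o₁ = v) (hu₂ : u₂ = x ∧ o₂ = y ∨ u₂ = y ∧ o₂ = x)
    (h : edgeClass (lay u₁) (lay o₁) = edgeClass (lay u₂) (lay o₂)) :
    lay v = lay x ∧ lay w = lay y ∧ lay u₁ = lay u₂ ∧ (lay w = lay v ∨ lay w = lay v + 1) := by
  unfold edgeClass at h
  rcases hu₁ with ⟨rfl, rfl⟩ | ⟨rfl, rfl⟩ <;> rcases hu₂ with ⟨rfl, rfl⟩ | ⟨rfl, rfl⟩ <;>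
    split_ifs at h <;> omega

theorem not_crossing_of_separated {v w x y : V} (hvx : lay v = lay x) (hwy : lay w = lay y)
    (hw : lay w = lay v ∨ lay w = lay v + 1)
    (hsep : addr v < addr x ∧ addr w < addr x ∧ addr w < addr y ∨
      addr x < addr v ∧ addr x < addr w ∧ addr y < addr w)
    (h₁ : layoutKey lay addr slot v < layoutKey lay addr slot x)
    (h₂ : layoutKey lay addr slot x < layoutKey lay addr slot w)
    (h₃ : layoutKey lay addr slot w < layoutKey lay addr slot y) : False := by
  have hne : addr v ≠ addr x ∧ addr x ≠ addr w ∧ addr w ≠ addr y := by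
    rcases hsep with ⟨h, h', h''⟩ | ⟨h, h', h''⟩
    · exact ⟨h.ne, h'.ne', h''.ne⟩
    · exact ⟨h.ne', h'.ne, h''.ne'⟩
  rw [layoutKey_lt_iff hvx hne.1] at h₁
  rcases hw with hw | hw
  · rw [layoutKey_lt_iff (by omega) hne.2.1, ← hvx] at h₂
    rcases hsep with ⟨h, h', -⟩ | ⟨h, h', -⟩
    · exact (h₂.not.mpr h'.asymm) (h₁.mpr h)
    · exact h₁.not.mpr h.asymm (h₂.mpr h')
  · rw [layoutKey_lt_iff hwy hne.2.2, hw, Nat.even_add_one] at h₃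
    rcases hsep with ⟨h, -, h'⟩ | ⟨h, -, h'⟩
    · exact h₃.mpr h' (h₁.mpr h)
    · exact h₃.not.mpr h'.asymm (h₁.not.mpr h.asymm)

theorem stackOf_comm (a b : V) :
    stackOf lay addr slot ℓ a b = stackOf lay addr slot ℓ b a :=
  min_comm _ _

theorem edgeStack_lt {u : V} (hu : slot u < ℓ) (o : V) :
    edgeStack lay addr slot ℓ u o < 5 * ℓ * ((addr u).length + 1) := by
  have := edgeClass_lt_five (lay u) (lay o)
  calc edgeStack lay addr slot ℓ u o
        < ℓ * (5 * (addr u).length + edgeClass (lay u) (lay o) + 1) := by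
          rw [edgeStack, mul_add ℓ _ 1]; omega
    _ ≤ ℓ * (5 * ((addr u).length + 1)) := Nat.mul_le_mul_left _ (by omega)
    _ = 5 * ℓ * ((addr u).length + 1) := by ring

theorem length_le_of_edgeStack_le {u o : V} (ho : slot o < ℓ)
    (h : edgeStack lay addr slot ℓ u o ≤ edgeStack lay addr slot ℓ o u) :
    (addr u).length ≤ (addr o).length := by
  by_contra! hlt
  have := edgeStack_lt (lay := lay) (addr := addr) ho u
  have : 5 * ℓ * ((addr o).length + 1) ≤ edgeStack lay addr slot ℓ u o :=
    calc 5 * ℓ * ((addr o).length + 1) ≤ ℓ * (5 * (addr u).length) := by nlinarith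
      _ ≤ edgeStack lay addr slot ℓ u o := by rw [edgeStack]; nlinarith
  omega

theorem exists_stackOf_eq {a b : V} (ha : slot a < ℓ) (hb : slot b < ℓ)
    (hpre : addr a <+: addr b ∨ addr b <+: addr a) :
    ∃ u o, (u = a ∧ o = b ∨ u = b ∧ o = a) ∧ addr u <+: addr a ∧ addr u <+: addr b ∧
      stackOf lay addr slot ℓ a b = edgeStack lay addr slot ℓ u o := by
  have prefix_of_length_le {l₁ l₂ : List ℕ} (h : l₁ <+: l₂ ∨ l₂ <+: l₁)
      (hl : l₁.length ≤ l₂.length) : l₁ <+: l₂ :=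
    h.elim id fun h => List.prefix_of_prefix_length_le (List.prefix_refl _) h hl
  rcases le_total (edgeStack lay addr slot ℓ a b) (edgeStack lay addr slot ℓ b a) with h | h
  · exact ⟨a, b, .inl ⟨rfl, rfl⟩, List.prefix_refl _,
      prefix_of_length_le hpre (length_le_of_edgeStack_le hb h), min_eq_left h⟩
  · exact ⟨b, a, .inr ⟨rfl, rfl⟩, prefix_of_length_le hpre.symm (length_le_of_edgeStack_le ha h),
      List.prefix_refl _, min_eq_right h⟩

theorem IsSeparationAddressing.not_crossing (hlay : IsLayering G lay)
    (h : IsSeparationAddressing (⊤ : G.Subgraph) lay ℓ addr slot) {v w x y : V}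
    (hvw : G.Adj v w) (hxy : G.Adj x y)
    (hst : stackOf lay addr slot ℓ v w = stackOf lay addr slot ℓ x y)
    (h₁ : layoutKey lay addr slot v < layoutKey lay addr slot x)
    (h₂ : layoutKey lay addr slot x < layoutKey lay addr slot w)
    (h₃ : layoutKey lay addr slot w < layoutKey lay addr slot y) : False := by
  have hslot (a : V) : slot a < ℓ := h.slot_lt a trivial
  obtain ⟨u₁, o₁, hu₁, hu₁v, hu₁w, hst₁⟩ := exists_stackOf_eq (lay := lay) (hslot v) (hslot w)
    (h.prefix_or_prefix v w (Subgraph.top_adj.mpr hvw))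
  obtain ⟨u₂, o₂, hu₂, hu₂x, hu₂y, hst₂⟩ := exists_stackOf_eq (lay := lay) (hslot x) (hslot y)
    (h.prefix_or_prefix x y (Subgraph.top_adj.mpr hxy))
  rw [hst₁, hst₂, edgeStack, edgeStack] at hst
  obtain ⟨hst, hslot_eq⟩ := Nat.eq_and_eq_of_mul_add_eq (hslot u₁) (hslot u₂) hst
  obtain ⟨hlen, hcls⟩ :=
    Nat.eq_and_eq_of_mul_add_eq (edgeClass_lt_five _ _) (edgeClass_lt_five _ _) hst
  obtain ⟨hvx, hwy, hlay_u, hw⟩ := lay_eq_of_edgeClass_eq (hlay v w hvw) (hlay x y hxy)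
    (lay_le_of_layoutKey_lt h₁) (lay_le_of_layoutKey_lt h₂) (lay_le_of_layoutKey_lt h₃)
    hu₁ hu₂ hcls
  have hu : u₁ ≠ u₂ := by
    rcases hu₁ with ⟨rfl, -⟩ | ⟨rfl, -⟩ <;> rcases hu₂ with ⟨rfl, -⟩ | ⟨rfl, -⟩ <;>
      rintro rfl <;> order
  have haddr : addr u₁ ≠ addr u₂ := fun he => hu (h.injOn u₁ trivial u₂ trivial he hlay_u hslot_eq)
  refine not_crossing_of_separated hvx hwy hw ?_ h₁ h₂ h₃
  rcases haddr.lt_or_gt with hlt | hlt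
  · exact .inl ⟨List.lt_of_lt_of_prefix hlt hlen hu₁v hu₂x,
      List.lt_of_lt_of_prefix hlt hlen hu₁w hu₂x, List.lt_of_lt_of_prefix hlt hlen hu₁w hu₂y⟩
  · exact .inr ⟨List.lt_of_lt_of_prefix hlt hlen.symm hu₂x hu₁v,
      List.lt_of_lt_of_prefix hlt hlen.symm hu₂x hu₁w,
      List.lt_of_lt_of_prefix hlt hlen.symm hu₂y hu₁w⟩

theorem IsSeparationAddressing.hasStackLayout [Finite V] (hlay : IsLayering G lay)
    (h : IsSeparationAddressing (⊤ : G.Subgraph) lay ℓ addr slot) :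
    HasStackLayout G (5 * ℓ * Nat.log 2 (Nat.card V)) := by
  obtain ⟨pos, hpos_inj, hpos⟩ := exists_injective_nat_lt_iff
    (layoutKey_injective (lay := lay) (addr := addr) (slot := slot)
      fun a b => h.injOn a trivial b trivial)
  refine ⟨pos, Sym2.lift ⟨stackOf lay addr slot ℓ, stackOf_comm⟩, hpos_inj,
    fun v w hvw => ?_, fun v w x y hvw hxy hst hcross => ?_⟩
  · obtain ⟨u, o, -, huv, huw, hst⟩ := exists_stackOf_eq (lay := lay) (h.slot_lt v trivial)
      (h.slot_lt w trivial) (h.prefix_or_prefix v w (Subgraph.top_adj.mpr hvw))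
    have hpow : 2 ^ ((addr u).length + 1) ≤ Nat.card V :=
      calc 2 ^ ((addr u).length + 1) ≤ 2 ^ (min (addr v).length (addr w).length + 1) :=
            Nat.pow_le_pow_right two_pos (by simpa using ⟨huv.length_le, huw.length_le⟩)
        _ ≤ Nat.card V := by
            simpa using h.two_pow_le v w (Subgraph.top_adj.mpr hvw)
    simp only [Sym2.lift_mk, hst]
    calc edgeStack lay addr slot ℓ u o < 5 * ℓ * ((addr u).length + 1) :=
          edgeStack_lt (h.slot_lt u trivial) o
      _ ≤ 5 * ℓ * Nat.log 2 (Nat.card V) :=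
          Nat.mul_le_mul_left _ (Nat.le_log_of_pow_le one_lt_two hpow)
  · simp only [Sym2.lift_mk, hpos] at hst hcross
    exact h.not_crossing hlay hvw hxy hst hcross.1 hcross.2.1 hcross.2.2

end Layout

/-- Every `n`-vertex graph admitting a layered `ℓ`-separator has stack-number
at most `5ℓ · log₂ n`. -/
theorem stack_number_layered_separator {V : Type*} [Fintype V]
    (G : SimpleGraph V) (ℓ : ℕ) (lay : V → ℕ)
    (hlay : IsLayering G lay) (hsep : HasLayeredSeparator G lay ℓ) :
    ∃ s : ℕ, HasStackLayout G s ∧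
      (s : ℝ) ≤ 5 * ℓ * Real.logb 2 (Fintype.card V) := by
  obtain ⟨addr, slot, h⟩ := hsep.exists_addressing ⊤
  refine ⟨_, h.hasStackLayout hlay, ?_⟩
  rw [Nat.card_eq_fintype_card]
  push_cast
  gcongr
  exact Real.natLog_le_logb _ _
end

section
/- Every n-vertex graph admitting a layered ℓ-separator (for some layering) has queue-number at most 3ℓ · log₂ n. -/
/-!
Split `G` recursively by layered separators. Every vertex lies in the separator of exactly one node
of the resulting tree, every edge joins a vertex to one in its own subtree, and since subtree sizes
halve at each level, a vertex with a neighbour in its subtree has depth below `log₂ n`. Lay out the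
vertices layer by layer, within a layer by the address of their node and then by their index among
the at most `ℓ` separator vertices of that node in that layer. Put an edge into the queue given by
its upper endpoint `a`: the depth of `a`, its index, and in which of three layers the other endpoint
lies. Subtrees of distinct nodes of equal depth appear in the same relative order in every layer,
so two nested edges of one queue would have the same upper endpoint.
-/

theorem List.append_lt_append_of_lt_of_length_eq {α : Type*} [LT α] {p q : List α}
    (h : p < q) (hlen : p.length = q.length) (s t : List α) : p ++ s < q ++ t := by
  induction h with
  | nil => simp at hlen
  | cons _ ih => exact List.Lex.cons (ih (by simpa using hlen))
  | rel hab => exact List.Lex.rel hab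

theorem List.lt_of_prefix_of_prefix {α : Type*} [LT α] {p q p' q' : List α} (h : p < q)
    (hlen : p.length = q.length) (hp : p <+: p') (hq : q <+: q') : p' < q' := by
  obtain ⟨s, rfl⟩ := hp
  obtain ⟨t, rfl⟩ := hq
  exact List.append_lt_append_of_lt_of_length_eq h hlen s t

theorem Nat.add_mul_lt_mul_of_lt {a b m n : ℕ} (ha : a < m) (hb : b < n) : a + m * b < m * n :=
  calc a + m * b < m * (b + 1) := by rw [mul_add_one]; omega
    _ ≤ m * n := Nat.mul_le_mul_left m hb

theorem Nat.eq_and_eq_of_add_mul_eq {a b a' b' m : ℕ} (ha : a < m) (ha' : a' < m)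
    (h : a + m * b = a' + m * b') : a = a' ∧ b = b' := by
  have hm : 0 < m := by omega
  obtain ⟨hb, ha⟩ := (Nat.div_mod_unique hm).2 ⟨rfl, ha⟩
  obtain ⟨hb', ha'⟩ := (Nat.div_mod_unique hm).2 ⟨rfl, ha'⟩
  rw [h] at hb ha
  exact ⟨ha.symm.trans ha', hb.symm.trans hb'⟩

theorem exists_nat_lt_iff_lt {V β : Type*} [Finite V] [LinearOrder β] (key : V → β) :
    ∃ pos : V → ℕ, ∀ u v, pos u < pos v ↔ key u < key v := by
  classical
  have := Fintype.ofFinite V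
  refine ⟨fun u => (Finset.univ.filter fun z => key z < key u).card,
    fun u v => ⟨fun h => ?_, fun h => ?_⟩⟩
  · by_contra! hvu
    exact (Finset.card_le_card (Finset.monotone_filter_right _
      fun z _ hz => lt_of_lt_of_le hz hvu)).not_gt h
  · refine Finset.card_lt_card ((Finset.ssubset_iff_of_subset ?_).2 ⟨u, ?_, ?_⟩)
    · exact Finset.monotone_filter_right _ fun z _ hz => hz.trans h
    · simpa using h
    · simp

theorem hasQueueLayout_of_injective {V β : Type*} [Finite V] [LinearOrder β] {G : SimpleGraph V}
    {key : V → β} (hkey : Function.Injective key) {col : V → V → ℕ} {q : ℕ}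
    (hcol : ∀ v w, G.Adj v w → key v < key w → col v w < q)
    (hnest : ∀ v w x y, G.Adj v w → G.Adj x y → key v < key x → key x < key y →
      key y < key w → col v w ≠ col x y) :
    HasQueueLayout G q := by
  obtain ⟨pos, hpos⟩ := exists_nat_lt_iff_lt key
  let f : Sym2 V → ℕ := Sym2.lift ⟨fun v w => if key v ≤ key w then col v w else col w v,
    fun v w => by
      rcases lt_trichotomy (key v) (key w) with h | h | h
      · simp [h.le, h.not_ge]
      · rw [hkey h]
      · simp [h.le, h.not_ge]⟩
  have hf : ∀ v w, key v < key w → f s(v, w) = col v w := fun v w h => if_pos h.le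
  refine ⟨pos, f, fun u v h => hkey ?_, fun v w hvw => ?_, ?_⟩
  · exact le_antisymm (not_lt.1 fun h' => ((hpos v u).2 h').ne' h)
      (not_lt.1 fun h' => ((hpos u v).2 h').ne h)
  · rcases lt_trichotomy (key v) (key w) with h | h | h
    · rw [hf v w h]; exact hcol v w hvw h
    · exact absurd (hkey h) hvw.ne
    · rw [Sym2.eq_swap, hf w v h]; exact hcol w v hvw.symm h
  · rintro v w x y hvw hxy hcol_eq ⟨h₁, h₂, h₃⟩
    rw [hpos] at h₁ h₂ h₃
    rw [hf v w (h₁.trans (h₂.trans h₃)), hf x y h₂] at hcol_eq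
    exact hnest v w x y hvw hxy h₁ h₂ h₃ hcol_eq

theorem exists_injOn_fibers_of_ncard_le {V ι : Type*} [Finite V] {lay : V → ι} {S : Set V}
    {ℓ : ℕ} (hS : ∀ i, (S ∩ {v | lay v = i}).ncard ≤ ℓ) :
    ∃ r : V → ℕ, (∀ v ∈ S, r v < ℓ) ∧
      ∀ v ∈ S, ∀ w ∈ S, lay v = lay w → r v = r w → v = w := by
  have hfiber : ∀ i, ∃ r : V → ℕ, S ∩ {v | lay v = i} ⊆ r ⁻¹' Set.Iio ℓ ∧
      Set.InjOn r (S ∩ {v | lay v = i}) := fun i =>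
    (Set.toFinite _).exists_injOn_of_encard_le (by
      rw [← (Set.toFinite _).cast_ncard_eq, ← (Set.finite_Iio ℓ).cast_ncard_eq,
        Set.ncard_Iio_nat]
      exact_mod_cast hS i)
  choose r hr_lt hr_inj using hfiber
  exact ⟨fun v => r (lay v) v, fun v hv => hr_lt _ ⟨hv, rfl⟩,
    fun v hv w hw hl h => hr_inj (lay w) ⟨hv, hl⟩ ⟨hw, rfl⟩ (by simpa [hl] using h)⟩

section Hierarchy

variable {V : Type*} {G : SimpleGraph V} {lay : V → ℕ} {ℓ : ℕ}

/-- A labelling of the vertices of `A` by a recursive separator decomposition: `addr v` is the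
address, in the tree of recursive separators, of the node whose separator contains `v`, and
`rank v` numbers the vertices of that separator within each layer. -/
structure IsSeparatorHierarchy (G : SimpleGraph V) (lay : V → ℕ) (ℓ : ℕ) (A : Set V)
    (addr : V → List ℕ) (rank : V → ℕ) : Prop where
  rank_lt : ∀ v ∈ A, rank v < ℓ
  injOn : ∀ v ∈ A, ∀ w ∈ A, lay v = lay w → addr v = addr w → rank v = rank w → v = w
  prefix_of_adj : ∀ v ∈ A, ∀ w ∈ A, G.Adj v w → addr v <+: addr w ∨ addr w <+: addr v
  two_pow_mul_ncard_le : ∀ p : List ℕ, 2 ^ p.length * {u ∈ A | p <+: addr u}.ncard ≤ A.ncard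

theorem isSeparatorHierarchy_empty (addr : V → List ℕ) (rank : V → ℕ) :
    IsSeparatorHierarchy G lay ℓ ∅ addr rank where
  rank_lt := by simp
  injOn := by simp
  prefix_of_adj := by simp
  two_pow_mul_ncard_le := by simp

theorem HasLayeredSeparator.exists_balanced_partition [Finite V]
    (hsep : HasLayeredSeparator G lay ℓ) (A : Set V) :
    ∃ S : Set V, (∀ i, (S ∩ {v | lay v = i}).ncard ≤ ℓ) ∧ ∃ part : V → ℕ,
      (∀ v ∈ A \ S, ∀ w ∈ A \ S, G.Adj v w → part v = part w) ∧
      ∀ j, 2 * {v ∈ A \ S | part v = j}.ncard ≤ A.ncard := by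
  classical
  obtain ⟨S, -, hS, hcomp⟩ := hsep ((⊤ : G.Subgraph).induce A)
  set H := (((⊤ : G.Subgraph).induce A).deleteVerts S).coe
  obtain ⟨idx, hidx⟩ : ∃ idx : H.ConnectedComponent → ℕ, Function.Injective idx :=
    (countable_iff_exists_injective _).1 inferInstance
  let comp : ∀ v, v ∈ A \ S → H.ConnectedComponent :=
    fun v hv => H.connectedComponentMk ⟨v, hv⟩
  let part : V → ℕ := fun v => if hv : v ∈ A \ S then idx (comp v hv) else 0
  have hpart : ∀ v (hv : v ∈ A \ S), part v = idx (comp v hv) := fun v hv => dif_pos hv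
  refine ⟨S, hS, part, fun v hv w hw hvw => ?_, fun j => ?_⟩
  · rw [hpart v hv, hpart w hw]
    exact congrArg idx (SimpleGraph.ConnectedComponent.sound (SimpleGraph.Adj.reachable
      ⟨hv, hw, hv.1, hw.1, hvw⟩))
  · obtain hempty | ⟨v, hv, rfl⟩ := Set.eq_empty_or_nonempty {v ∈ A \ S | part v = j}
    · rw [hempty, Set.ncard_empty]; exact Nat.zero_le _
    · have hsub : {u ∈ A \ S | part u = part v} ⊆ Subtype.val '' (comp v hv).supp :=
        fun u ⟨hu, huv⟩ => ⟨⟨u, hu⟩, hidx (by rwa [← hpart, ← hpart]), rfl⟩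
      calc 2 * {u ∈ A \ S | part u = part v}.ncard
          ≤ 2 * (Subtype.val '' (comp v hv).supp).ncard :=
            Nat.mul_le_mul_left 2 (Set.ncard_le_ncard hsub (Set.toFinite _))
        _ = 2 * (comp v hv).supp.ncard := by
            rw [Set.ncard_image_of_injective _ Subtype.val_injective]
        _ ≤ A.ncard := hcomp _

theorem IsSeparatorHierarchy.glue {A S : Set V} {part r : V → ℕ} {addr : ℕ → V → List ℕ}
    {rank : ℕ → V → ℕ} [DecidablePred (· ∈ S)] (hr : ∀ v ∈ S, r v < ℓ)
    (hr_inj : ∀ v ∈ S, ∀ w ∈ S, lay v = lay w → r v = r w → v = w)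
    (hpart : ∀ v ∈ A \ S, ∀ w ∈ A \ S, G.Adj v w → part v = part w)
    (hhalf : ∀ j, 2 * {v ∈ A \ S | part v = j}.ncard ≤ A.ncard)
    (H : ∀ j, IsSeparatorHierarchy G lay ℓ {v ∈ A \ S | part v = j} (addr j) (rank j)) :
    IsSeparatorHierarchy G lay ℓ A (fun v => if v ∈ S then [] else part v :: addr (part v) v)
      (fun v => if v ∈ S then r v else rank (part v) v) where
  rank_lt v hv := by
    by_cases hvS : v ∈ S
    · simpa [hvS] using hr v hvS
    · simpa [hvS] using (H (part v)).rank_lt v ⟨⟨hv, hvS⟩, rfl⟩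
  injOn v hv w hw hl ha hrk := by
    by_cases hvS : v ∈ S <;> by_cases hwS : w ∈ S <;> simp only [hvS, hwS, if_true, if_false,
      List.cons.injEq, reduceCtorEq] at ha hrk
    · exact hr_inj v hvS w hwS hl hrk
    · obtain ⟨hvw, ha⟩ := ha
      rw [hvw] at ha hrk
      exact (H (part w)).injOn v ⟨⟨hv, hvS⟩, hvw⟩ w ⟨⟨hw, hwS⟩, rfl⟩ hl ha hrk
  prefix_of_adj v hv w hw hvw := by
    by_cases hvS : v ∈ S
    · simp [hvS]
    by_cases hwS : w ∈ S
    · simp [hwS]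
    have hvw' := hpart v ⟨hv, hvS⟩ w ⟨hw, hwS⟩ hvw
    simp only [hvS, hwS, if_false, List.cons_prefix_cons, true_and, hvw']
    exact (H (part w)).prefix_of_adj v ⟨⟨hv, hvS⟩, hvw'⟩ w ⟨⟨hw, hwS⟩, rfl⟩ hvw
  two_pow_mul_ncard_le
    | [] => by simp
    | j :: p => by
      have hsub : {u ∈ A | j :: p <+: if u ∈ S then [] else part u :: addr (part u) u} =
          {u ∈ {v ∈ A \ S | part v = j} | p <+: addr j u} := by
        ext u
        by_cases huS : u ∈ S
        · simp [huS]
        · simp [huS, List.cons_prefix_cons]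
          grind
      rw [hsub, List.length_cons, pow_succ, mul_comm _ 2, mul_assoc]
      exact (Nat.mul_le_mul_left 2 ((H j).two_pow_mul_ncard_le p)).trans (hhalf j)

theorem HasLayeredSeparator.exists_isSeparatorHierarchy [Finite V]
    (hsep : HasLayeredSeparator G lay ℓ) (A : Set V) :
    ∃ addr rank, IsSeparatorHierarchy G lay ℓ A addr rank := by
  classical
  induction hn : A.ncard using Nat.strong_induction_on generalizing A with
  | _ n ih =>
  obtain rfl | hA := A.eq_empty_or_nonempty
  · exact ⟨fun _ => [], fun _ => 0, isSeparatorHierarchy_empty _ _⟩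
  obtain ⟨S, hS, part, hpart, hhalf⟩ := hsep.exists_balanced_partition A
  obtain ⟨r, hr, hr_inj⟩ := exists_injOn_fibers_of_ncard_le hS
  have hsmall : ∀ j, {v ∈ A \ S | part v = j}.ncard < n := fun j => by
    have := hA.ncard_pos (Set.toFinite A)
    have := hhalf j
    omega
  choose addr rank H using fun j => ih _ (hsmall j) _ rfl
  exact ⟨_, _, IsSeparatorHierarchy.glue hr hr_inj hpart hhalf H⟩

theorem IsSeparatorHierarchy.length_lt_log [Finite V] {A : Set V} {addr : V → List ℕ}
    {rank : V → ℕ} (H : IsSeparatorHierarchy G lay ℓ A addr rank) {a b : V} (ha : a ∈ A)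
    (hb : b ∈ A) (hab : a ≠ b) (h : addr a <+: addr b) :
    (addr a).length < Nat.log 2 A.ncard := by
  have htwo : 2 ≤ {u ∈ A | addr a <+: addr u}.ncard := by
    rw [← Set.ncard_pair hab]
    exact Set.ncard_le_ncard (Set.pair_subset ⟨ha, List.prefix_rfl⟩ ⟨hb, h⟩) (Set.toFinite _)
  refine Nat.le_log_of_pow_le one_lt_two ?_
  calc 2 ^ ((addr a).length + 1) = 2 ^ (addr a).length * 2 := pow_succ _ _
    _ ≤ 2 ^ (addr a).length * {u ∈ A | addr a <+: addr u}.ncard := Nat.mul_le_mul_left _ htwo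
    _ ≤ A.ncard := H.two_pow_mul_ncard_le _

section Layout

variable {addr : V → List ℕ} {rank : V → ℕ}

def hierarchyKey (lay : V → ℕ) (addr : V → List ℕ) (rank : V → ℕ) (v : V) : ℕ ×ₗ List ℕ :=
  toLex (lay v, addr v ++ [rank v])

/-- Meant for an edge `ab` with `addr a <+: addr b`. Along an edge `lay` changes by at most one,
so the lowest digit `lay b + 1 - lay a` is never truncated and lies in `{0, 1, 2}`. -/
def edgeColor (lay : V → ℕ) (ℓ : ℕ) (addr : V → List ℕ) (rank : V → ℕ) (a b : V) : ℕ :=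
  (lay b + 1 - lay a) + 3 * (rank a + ℓ * (addr a).length)

theorem IsSeparatorHierarchy.hierarchyKey_injective
    (H : IsSeparatorHierarchy G lay ℓ Set.univ addr rank) :
    Function.Injective (hierarchyKey lay addr rank) := by
  intro u v h
  simp only [hierarchyKey, EmbeddingLike.apply_eq_iff_eq, Prod.mk.injEq] at h
  obtain ⟨ha, hr⟩ := List.append_inj' h.2 rfl
  exact H.injOn u trivial v trivial h.1 ha (List.singleton_inj.1 hr)

theorem lay_le_of_hierarchyKey_lt {u v : V}
    (h : hierarchyKey lay addr rank u < hierarchyKey lay addr rank v) : lay u ≤ lay v :=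
  (Prod.Lex.lt_iff.1 h).elim le_of_lt fun h => h.1.le

theorem append_lt_of_hierarchyKey_lt {u v : V}
    (h : hierarchyKey lay addr rank u < hierarchyKey lay addr rank v) (hl : lay u = lay v) :
    addr u ++ [rank u] < addr v ++ [rank v] :=
  (Prod.Lex.lt_iff.1 h).resolve_left (by simp [hierarchyKey, hl]) |>.2

theorem IsLayering.add_one_sub_lt_three (hlay : IsLayering G lay) {a b : V} (hab : G.Adj a b) :
    lay b + 1 - lay a < 3 := by
  rcases hlay a b hab with h | h | h <;> omega

theorem edgeColor_lt (hlay : IsLayering G lay) {a b : V} (hab : G.Adj a b) (ha : rank a < ℓ)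
    {D : ℕ} (hD : (addr a).length < D) : edgeColor lay ℓ addr rank a b < 3 * ℓ * D := by
  rw [mul_assoc]
  exact Nat.add_mul_lt_mul_of_lt (hlay.add_one_sub_lt_three hab) (Nat.add_mul_lt_mul_of_lt ha hD)

theorem eq_of_edgeColor_eq (hlay : IsLayering G lay) {a b c d : V} (hab : G.Adj a b)
    (hcd : G.Adj c d) (ha : rank a < ℓ) (hc : rank c < ℓ)
    (h : edgeColor lay ℓ addr rank a b = edgeColor lay ℓ addr rank c d) :
    lay b + 1 - lay a = lay d + 1 - lay c ∧ rank a = rank c ∧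
      (addr a).length = (addr c).length := by
  obtain ⟨hoff, h'⟩ := Nat.eq_and_eq_of_add_mul_eq (hlay.add_one_sub_lt_three hab)
    (hlay.add_one_sub_lt_three hcd) h
  exact ⟨hoff, Nat.eq_and_eq_of_add_mul_eq ha hc h'⟩

theorem IsSeparatorHierarchy.not_nested (hlay : IsLayering G lay)
    (H : IsSeparatorHierarchy G lay ℓ Set.univ addr rank) {v w x y a b c d : V}
    (hvw : a = v ∧ b = w ∨ a = w ∧ b = v) (hxy : c = x ∧ d = y ∨ c = y ∧ d = x)
    (hab : G.Adj a b) (hcd : G.Adj c d) (hpab : addr a <+: addr b) (hpcd : addr c <+: addr d)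
    (hcol : edgeColor lay ℓ addr rank a b = edgeColor lay ℓ addr rank c d)
    (h₁ : hierarchyKey lay addr rank v < hierarchyKey lay addr rank x)
    (h₂ : hierarchyKey lay addr rank x < hierarchyKey lay addr rank y)
    (h₃ : hierarchyKey lay addr rank y < hierarchyKey lay addr rank w) : False := by
  obtain ⟨hoff, hrank, hlen⟩ :=
    eq_of_edgeColor_eq hlay hab hcd (H.rank_lt a trivial) (H.rank_lt c trivial) hcol
  have hl₁ := lay_le_of_hierarchyKey_lt h₁
  have hl₂ := lay_le_of_hierarchyKey_lt h₂
  have hl₃ := lay_le_of_hierarchyKey_lt h₃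
  have hlays : lay v = lay x ∧ lay y = lay w ∧ lay a = lay c := by
    have := hlay a b hab
    have := hlay c d hcd
    rcases hvw with ⟨rfl, rfl⟩ | ⟨rfl, rfl⟩ <;> rcases hxy with ⟨rfl, rfl⟩ | ⟨rfl, rfl⟩ <;>
      omega
  have hpre_a : addr a <+: addr v ∧ addr a <+: addr w := by
    rcases hvw with ⟨rfl, rfl⟩ | ⟨rfl, rfl⟩
    exacts [⟨List.prefix_rfl, hpab⟩, ⟨hpab, List.prefix_rfl⟩]
  have hpre_c : addr c <+: addr x ∧ addr c <+: addr y := by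
    rcases hxy with ⟨rfl, rfl⟩ | ⟨rfl, rfl⟩
    exacts [⟨List.prefix_rfl, hpcd⟩, ⟨hpcd, List.prefix_rfl⟩]
  -- Otherwise the subtrees of `a` and `c` would appear in one order in the layer of `v` and `x`
  -- and in the other order in the layer of `y` and `w`.
  have haddr : addr a = addr c := by
    rcases lt_trichotomy (addr a) (addr c) with h | h | h
    · exact absurd (List.lt_of_prefix_of_prefix h hlen
        (hpre_a.2.trans (List.prefix_append _ _)) (hpre_c.2.trans (List.prefix_append _ _)))
        (append_lt_of_hierarchyKey_lt h₃ hlays.2.1).asymm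
    · exact h
    · exact absurd (List.lt_of_prefix_of_prefix h hlen.symm
        (hpre_c.1.trans (List.prefix_append _ _)) (hpre_a.1.trans (List.prefix_append _ _)))
        (append_lt_of_hierarchyKey_lt h₁ hlays.1).asymm
  have hac : a = c := H.injOn a trivial c trivial hlays.2.2 haddr hrank
  rcases hvw with ⟨rfl, -⟩ | ⟨rfl, -⟩ <;> rcases hxy with ⟨rfl, -⟩ | ⟨rfl, -⟩ <;>
    subst hac <;> order

theorem IsSeparatorHierarchy.hasQueueLayout [Finite V] (hlay : IsLayering G lay)
    (H : IsSeparatorHierarchy G lay ℓ Set.univ addr rank) {D : ℕ}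
    (hD : ∀ a b, G.Adj a b → addr a <+: addr b → (addr a).length < D) :
    HasQueueLayout G (3 * ℓ * D) := by
  let col (v w : V) : ℕ := if (addr v).length ≤ (addr w).length then
    edgeColor lay ℓ addr rank v w else edgeColor lay ℓ addr rank w v
  have hanchor : ∀ v w, G.Adj v w → ∃ a b, (a = v ∧ b = w ∨ a = w ∧ b = v) ∧ G.Adj a b ∧
      addr a <+: addr b ∧ col v w = edgeColor lay ℓ addr rank a b := by
    intro v w hvw
    have hpre := H.prefix_of_adj v trivial w trivial hvw
    by_cases hlen : (addr v).length ≤ (addr w).length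
    · refine ⟨v, w, .inl ⟨rfl, rfl⟩, hvw, hpre.elim id fun h => ?_, if_pos hlen⟩
      rw [h.eq_of_length (h.length_le.antisymm hlen)]
    · exact ⟨w, v, .inr ⟨rfl, rfl⟩, hvw.symm, hpre.resolve_left fun h => hlen h.length_le,
        if_neg hlen⟩
  refine hasQueueLayout_of_injective H.hierarchyKey_injective (col := col)
    (fun v w hvw _ => ?_) (fun v w x y hvw hxy h₁ h₂ h₃ hcol => ?_)
  · obtain ⟨a, b, -, hab, hpab, hcol⟩ := hanchor v w hvw
    rw [hcol]
    exact edgeColor_lt hlay hab (H.rank_lt a trivial) (hD a b hab hpab)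
  · obtain ⟨a, b, hvw', hab, hpab, hcol_ab⟩ := hanchor v w hvw
    obtain ⟨c, d, hxy', hcd, hpcd, hcol_cd⟩ := hanchor x y hxy
    exact H.not_nested hlay hvw' hxy' hab hcd hpab hpcd (hcol_ab ▸ hcol_cd ▸ hcol)
      h₁ h₂ h₃

end Layout

end Hierarchy

/-- Every `n`-vertex graph admitting a layered `ℓ`-separator has queue-number
at most `3ℓ · log₂ n`. -/
theorem queue_number_layered_separator {V : Type*} [Fintype V]
    (G : SimpleGraph V) (ℓ : ℕ) (lay : V → ℕ)
    (hlay : IsLayering G lay) (hsep : HasLayeredSeparator G lay ℓ) :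
    ∃ q : ℕ, HasQueueLayout G q ∧
      (q : ℝ) ≤ 3 * ℓ * Real.logb 2 (Fintype.card V) := by
  obtain ⟨addr, rank, H⟩ := hsep.exists_isSeparatorHierarchy Set.univ
  have hdepth : ∀ a b, G.Adj a b → addr a <+: addr b →
      (addr a).length < Nat.log 2 (Fintype.card V) := fun a b hab h => by
    simpa using H.length_lt_log trivial trivial hab.ne h
  refine ⟨3 * ℓ * Nat.log 2 (Fintype.card V), H.hasQueueLayout hlay hdepth, ?_⟩
  push_cast
  gcongr
  exact Real.natLog_le_logb _ _
end

section
/- In an n-vertex graph with a layered ℓ-separator, the intra-layer edges can be partitioned into at most ℓ · log₂ n stacks with respect to the ordering σ^s constructed recursively from the separator decomposition (alternating the direction in which components are listed within each layer). -/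
/-!
Split the vertex set recursively along layered separators. Within a layer the separator vertices
come first, followed by the components of `G - S`, each as a contiguous block ordered recursively;
positions are lists of naturals compared lexicographically, so the block of a vertex is the head of
its list. An intra-layer edge at a separator vertex goes to the stack numbered by that vertex's
slot among the at most `ℓ` separator vertices of its layer: within one layer such a stack is a star,
which has no crossing. Edges inside a component keep their recursive stacks shifted by `ℓ`, and
edges of different components lie in disjoint blocks, so they cannot cross. Components have at most
half of the vertices, so there are `log₂ n` levels, each adding `ℓ` stacks.
-/

open Function

section

variable {V : Type*}

theorem List.cons_crossing_iff {α : Type*} [LinearOrder α] {a b : α} {l₁ l₂ l₃ l₄ : List α} :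
    (a :: l₁ < b :: l₂ ∧ b :: l₂ < a :: l₃ ∧ a :: l₃ < b :: l₄) ↔
      a = b ∧ l₁ < l₂ ∧ l₂ < l₃ ∧ l₃ < l₄ := by
  constructor
  · rintro ⟨h₁, h₂, h₃⟩
    obtain rfl : a = b := le_antisymm (List.head_le_of_lt h₁) (List.head_le_of_lt h₂)
    simp_all
  · rintro ⟨rfl, h⟩
    simpa [List.cons_lt_cons_iff] using h

theorem exists_injective_nat_lt_iff_lt {α : Type*} [Fintype V] [LinearOrder α] {key : V → α}
    (hkey : Injective key) :
    ∃ rank : V → ℕ, Injective rank ∧ ∀ u v, rank u < rank v ↔ key u < key v := by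
  classical
  let e := (Finset.univ.image key).orderIsoOfFin rfl
  let rank v : ℕ := e.symm ⟨key v, Finset.mem_image_of_mem key (Finset.mem_univ v)⟩
  have hlt : ∀ u v, rank u < rank v ↔ key u < key v := fun u v => by
    simp only [rank, ← Fin.lt_def, OrderIso.lt_iff_lt, Subtype.mk_lt_mk]
  refine ⟨rank, fun u v h => hkey ?_, hlt⟩
  simpa using e.symm.injective (Fin.ext h)

theorem exists_injOn_fibers_lt [Finite V] {β : Type*} (lay : V → β) {S : Set V} {ℓ : ℕ}
    (hS : ∀ i, (S ∩ {v | lay v = i}).ncard ≤ ℓ) :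
    ∃ idx : V → ℕ, (∀ v ∈ S, idx v < ℓ) ∧
      ∀ u ∈ S, ∀ v ∈ S, lay u = lay v → idx u = idx v → u = v := by
  have : ∀ i, ∃ g : V → ℕ, S ∩ {v | lay v = i} ⊆ g ⁻¹' Set.Iio ℓ ∧
      Set.InjOn g (S ∩ {v | lay v = i}) := fun i =>
    (Set.toFinite _).exists_injOn_of_encard_le <| by
      rw [← (Set.toFinite _).cast_ncard_eq, ← (Set.finite_Iio ℓ).cast_ncard_eq,
        Set.ncard_Iio_nat]
      exact_mod_cast hS i
  choose g hmaps hinj using this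
  refine ⟨fun v => g (lay v) v, fun v hv => hmaps _ ⟨hv, rfl⟩, fun u hu v hv huv h => ?_⟩
  dsimp only at h
  rw [← huv] at h
  exact hinj (lay u) ⟨hu, rfl⟩ ⟨hv, huv.symm⟩ h

theorem HasLayeredSeparator.exists_separation [Finite V] {G : SimpleGraph V} {lay : V → ℕ}
    {ℓ : ℕ} (hsep : HasLayeredSeparator G lay ℓ) (A : Set V) :
    ∃ (S : Set V) (comp : V → ℕ), (∀ i, (S ∩ {v | lay v = i}).ncard ≤ ℓ) ∧
      (∀ v ∈ A \ S, ∀ w ∈ A \ S, G.Adj v w → comp v = comp w) ∧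
      ∀ k, 2 * (A \ S ∩ {v | comp v = k}).ncard ≤ A.ncard := by
  classical
  obtain ⟨S, -, hSl, hsmall⟩ := hsep ((⊤ : G.Subgraph).induce A)
  set Γ := ((⊤ : G.Subgraph).induce A).deleteVerts S
  have hΓ : ∀ {v}, v ∈ Γ.verts ↔ v ∈ A \ S := by simp [Γ]
  obtain ⟨e, he⟩ := Countable.exists_injective_nat Γ.coe.ConnectedComponent
  let comp v := if h : v ∈ Γ.verts then e (Γ.coe.connectedComponentMk ⟨v, h⟩) else 0
  have hcomp : ∀ {v} (hv : v ∈ A \ S), comp v = e (Γ.coe.connectedComponentMk ⟨v, hΓ.2 hv⟩) :=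
    fun hv => dif_pos (hΓ.2 hv)
  refine ⟨S, comp, hSl, fun v hv w hw hadj => ?_, fun k => ?_⟩
  · have : Γ.coe.Adj ⟨v, hΓ.2 hv⟩ ⟨w, hΓ.2 hw⟩ := by
      simp [Γ, hv.1, hv.2, hw.1, hw.2, hadj]
    rw [hcomp hv, hcomp hw]
    exact congrArg e (SimpleGraph.ConnectedComponent.sound this.reachable)
  rcases (A \ S ∩ {v | comp v = k}).eq_empty_or_nonempty with h | ⟨v, hv, rfl⟩
  · simp [h]
  let c := Γ.coe.connectedComponentMk ⟨v, hΓ.2 hv⟩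
  have hsub : A \ S ∩ {w | comp w = comp v} ⊆ Subtype.val '' c.supp := by
    rintro w ⟨hw, hcw : comp w = comp v⟩
    refine ⟨⟨w, hΓ.2 hw⟩, he ?_, rfl⟩
    rwa [hcomp hw, hcomp hv] at hcw
  calc 2 * (A \ S ∩ {w | comp w = comp v}).ncard ≤ 2 * c.supp.ncard := by
        gcongr
        exact (Set.ncard_le_ncard hsub).trans (Set.ncard_image_le c.supp.toFinite)
    _ ≤ A.ncard := hsmall c

structure IsIntraLayerStackLayoutOn {α : Type*} [LT α] (G : SimpleGraph V) (lay : V → ℕ)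
    (A : Set V) (pos : V → α) (stack : Sym2 V → ℕ) (s : ℕ) : Prop where
  injOn : ∀ u ∈ A, ∀ v ∈ A, lay u = lay v → pos u = pos v → u = v
  stack_lt : ∀ v ∈ A, ∀ w ∈ A, G.Adj v w → lay v = lay w → stack s(v, w) < s
  not_crossing : ∀ v ∈ A, ∀ w ∈ A, ∀ x ∈ A, ∀ y ∈ A, G.Adj v w → G.Adj x y →
    lay v = lay w → lay x = lay y → lay v = lay x → stack s(v, w) = stack s(x, y) →
    ¬ (pos v < pos x ∧ pos x < pos w ∧ pos w < pos y)

theorem IsIntraLayerStackLayoutOn.of_subsingleton {α : Type*} [LT α] {G : SimpleGraph V}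
    {lay : V → ℕ} {A : Set V} (hA : A.Subsingleton) (pos : V → α) (stack : Sym2 V → ℕ) :
    IsIntraLayerStackLayoutOn G lay A pos stack 0 where
  injOn _ hu _ hv _ _ := hA hu hv
  stack_lt _ hv _ hw hadj _ := absurd (hA hv hw) hadj.ne
  not_crossing _ hv _ hw _ _ _ _ hadj _ _ _ _ _ := absurd (hA hv hw) hadj.ne

section Combine

variable {S : Set V} {idx comp : V → ℕ} {ℓ s : ℕ}
  {posC : ℕ → V → List ℕ} {stackC : ℕ → Sym2 V → ℕ}

open Classical in
noncomputable def combinedPos (S : Set V) (idx comp : V → ℕ) (ℓ : ℕ) (posC : ℕ → V → List ℕ)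
    (v : V) : List ℕ :=
  if v ∈ S then [idx v] else (ℓ + comp v) :: posC (comp v) v

open Classical in
/-- On an edge with both ends in the same component, `(e.map comp).inf` is that component. -/
noncomputable def combinedStack (S : Set V) (idx comp : V → ℕ) (ℓ : ℕ) (stackC : ℕ → Sym2 V → ℕ)
    (e : Sym2 V) : ℕ :=
  if h : ∃ u ∈ S, u ∈ e then idx h.choose else ℓ + stackC (e.map comp).inf e

theorem combinedStack_of_mem (idx comp : V → ℕ) (ℓ : ℕ) (stackC : ℕ → Sym2 V → ℕ) {v w : V}
    (h : v ∈ S ∨ w ∈ S) :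
    ∃ u ∈ S, (u = v ∨ u = w) ∧ combinedStack S idx comp ℓ stackC s(v, w) = idx u := by
  have hex : ∃ u ∈ S, u ∈ s(v, w) :=
    h.elim (fun hv => ⟨v, hv, by simp⟩) (fun hw => ⟨w, hw, by simp⟩)
  refine ⟨hex.choose, hex.choose_spec.1, Sym2.mem_iff.1 hex.choose_spec.2, ?_⟩
  rw [combinedStack, dif_pos hex]

theorem combinedStack_of_not_mem {v w : V} (hv : v ∉ S) (hw : w ∉ S) (hvw : comp v = comp w) :
    combinedStack S idx comp ℓ stackC s(v, w) = ℓ + stackC (comp v) s(v, w) := by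
  have hex : ¬ ∃ u ∈ S, u ∈ s(v, w) := by
    rintro ⟨u, hu, huvw⟩
    rcases Sym2.mem_iff.1 huvw with rfl | rfl <;> contradiction
  rw [combinedStack, dif_neg hex, Sym2.map_mk, Sym2.inf_mk, hvw, inf_idem]

theorem IsIntraLayerStackLayoutOn.combine {G : SimpleGraph V} {lay : V → ℕ} {A : Set V}
    (hidx_lt : ∀ v ∈ S, idx v < ℓ)
    (hidx_inj : ∀ u ∈ S, ∀ v ∈ S, lay u = lay v → idx u = idx v → u = v)
    (hcomp : ∀ v ∈ A \ S, ∀ w ∈ A \ S, G.Adj v w → comp v = comp w)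
    (hC : ∀ k,
      IsIntraLayerStackLayoutOn G lay (A \ S ∩ {v | comp v = k}) (posC k) (stackC k) s) :
    IsIntraLayerStackLayoutOn G lay A (combinedPos S idx comp ℓ posC)
      (combinedStack S idx comp ℓ stackC) (ℓ + s) where
  injOn u hu v hv huv h := by
    by_cases huS : u ∈ S <;> by_cases hvS : v ∈ S <;>
      simp only [combinedPos, huS, hvS, if_true, if_false, List.cons.injEq] at h
    · exact hidx_inj u huS v hvS huv h.1
    · have := hidx_lt u huS; omega
    · have := hidx_lt v hvS; omega
    · obtain ⟨hk, h⟩ := h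
      have hk : comp u = comp v := by omega
      exact (hC (comp u)).injOn u ⟨⟨hu, huS⟩, rfl⟩ v ⟨⟨hv, hvS⟩, hk.symm⟩ huv (hk ▸ h)
  stack_lt v hv w hw hadj hvw := by
    by_cases h : v ∈ S ∨ w ∈ S
    · obtain ⟨u, huS, -, hu⟩ := combinedStack_of_mem idx comp ℓ stackC h
      have := hidx_lt u huS
      omega
    · rw [not_or] at h
      have hk := hcomp v ⟨hv, h.1⟩ w ⟨hw, h.2⟩ hadj
      rw [combinedStack_of_not_mem h.1 h.2 hk]
      have := (hC (comp v)).stack_lt v ⟨⟨hv, h.1⟩, rfl⟩ w ⟨⟨hw, h.2⟩, hk.symm⟩ hadj hvw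
      omega
  not_crossing v hv w hw x hx y hy hvw hxy hlvw hlxy hlvx hstack hcross := by
    by_cases hvwS : v ∈ S ∨ w ∈ S <;> by_cases hxyS : x ∈ S ∨ y ∈ S
    · obtain ⟨u, huS, hu, hu_eq⟩ := combinedStack_of_mem idx comp ℓ stackC hvwS
      obtain ⟨u', hu'S, hu', hu'_eq⟩ := combinedStack_of_mem idx comp ℓ stackC hxyS
      have hlay : lay u = lay u' := by
        rcases hu with rfl | rfl <;> rcases hu' with rfl | rfl <;> omega
      obtain rfl := hidx_inj u huS u' hu'S hlay (hu_eq ▸ hu'_eq ▸ hstack)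
      rcases hu with rfl | rfl <;> rcases hu' with h | h <;> subst h <;> order
    · obtain ⟨u, huS, -, hu_eq⟩ := combinedStack_of_mem idx comp ℓ stackC hvwS
      rw [not_or] at hxyS
      have hk := hcomp x ⟨hx, hxyS.1⟩ y ⟨hy, hxyS.2⟩ hxy
      have := hidx_lt u huS
      rw [hu_eq, combinedStack_of_not_mem hxyS.1 hxyS.2 hk] at hstack
      omega
    · obtain ⟨u, huS, -, hu_eq⟩ := combinedStack_of_mem idx comp ℓ stackC hxyS
      rw [not_or] at hvwS
      have hk := hcomp v ⟨hv, hvwS.1⟩ w ⟨hw, hvwS.2⟩ hvw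
      have := hidx_lt u huS
      rw [hu_eq, combinedStack_of_not_mem hvwS.1 hvwS.2 hk] at hstack
      omega
    · rw [not_or] at hvwS hxyS
      have hkvw := hcomp v ⟨hv, hvwS.1⟩ w ⟨hw, hvwS.2⟩ hvw
      have hkxy := hcomp x ⟨hx, hxyS.1⟩ y ⟨hy, hxyS.2⟩ hxy
      rw [combinedStack_of_not_mem hvwS.1 hvwS.2 hkvw,
        combinedStack_of_not_mem hxyS.1 hxyS.2 hkxy] at hstack
      simp only [combinedPos, hvwS.1, hvwS.2, hxyS.1, hxyS.2, if_false, ← hkvw, ← hkxy,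
        List.cons_crossing_iff] at hcross
      obtain ⟨hkvx, hcross⟩ := hcross
      replace hkvx : comp v = comp x := by omega
      rw [← hkvx] at hcross hstack hkxy
      exact (hC (comp v)).not_crossing v ⟨⟨hv, hvwS.1⟩, rfl⟩ w ⟨⟨hw, hvwS.2⟩, hkvw.symm⟩
        x ⟨⟨hx, hxyS.1⟩, hkvx.symm⟩ y ⟨⟨hy, hxyS.2⟩, hkxy.symm⟩
        hvw hxy hlvw hlxy hlvx (by omega) hcross

end Combine

theorem HasLayeredSeparator.exists_isIntraLayerStackLayoutOn [Finite V] {G : SimpleGraph V}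
    {lay : V → ℕ} {ℓ : ℕ} (hsep : HasLayeredSeparator G lay ℓ) (n : ℕ) (A : Set V)
    (hA : A.ncard ≤ n) :
    ∃ (pos : V → List ℕ) (stack : Sym2 V → ℕ),
      IsIntraLayerStackLayoutOn G lay A pos stack (ℓ * Nat.log 2 n) := by
  induction n using Nat.strong_induction_on generalizing A with
  | _ n ih =>
  rcases lt_or_ge n 2 with hn | hn
  · rw [Nat.log_of_lt hn, mul_zero]
    exact ⟨fun _ => [], fun _ => 0, .of_subsingleton
      ((Set.ncard_le_one_iff_subsingleton).1 (by omega)) _ _⟩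
  obtain ⟨S, comp, hS, hcomp, hsmall⟩ := hsep.exists_separation A
  obtain ⟨idx, hidx_lt, hidx_inj⟩ := exists_injOn_fibers_lt lay hS
  have hparts : ∀ k, ∃ (pos : V → List ℕ) (stack : Sym2 V → ℕ), IsIntraLayerStackLayoutOn G lay
      (A \ S ∩ {v | comp v = k}) pos stack (ℓ * Nat.log 2 (n / 2)) := fun k =>
    ih (n / 2) (by omega) _ (by have := hsmall k; omega)
  choose posC stackC hC using hparts
  have hlog : ℓ + ℓ * Nat.log 2 (n / 2) = ℓ * Nat.log 2 n := by
    rw [Nat.log_div_base, mul_tsub, mul_one,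
      add_tsub_cancel_of_le (Nat.le_mul_of_pos_right ℓ (Nat.log_pos one_lt_two hn))]
  exact ⟨_, _, hlog ▸ IsIntraLayerStackLayoutOn.combine hidx_lt hidx_inj hcomp hC⟩

end

theorem intra_layer_stacks_general {V : Type*} [Fintype V]
    (G : SimpleGraph V) (ℓ : ℕ) (lay : V → ℕ)
    (hsep : HasLayeredSeparator G lay ℓ) :
    ∃ (pos : V → ℕ) (f : Sym2 V → ℕ) (s : ℕ), Function.Injective pos ∧
      (∀ u v : V, lay u < lay v → pos u < pos v) ∧
      (s : ℝ) ≤ ℓ * Real.logb 2 (Fintype.card V) ∧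
      (∀ v w : V, G.Adj v w → lay v = lay w → f s(v, w) < s) ∧
      (∀ v w x y : V, G.Adj v w → G.Adj x y → lay v = lay w → lay x = lay y →
        f s(v, w) = f s(x, y) →
        ¬ (pos v < pos x ∧ pos x < pos w ∧ pos w < pos y)) := by
  obtain ⟨pos, stack, h⟩ := hsep.exists_isIntraLayerStackLayoutOn _ Set.univ
    (Set.ncard_univ V ▸ Nat.card_eq_fintype_card.le)
  have hkey : Injective fun v => lay v :: pos v := fun u v huv =>
    h.injOn u trivial v trivial (List.cons.inj huv).1 (List.cons.inj huv).2
  obtain ⟨rank, hrank, hrank_lt⟩ := exists_injective_nat_lt_iff_lt hkey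
  refine ⟨rank, stack, ℓ * Nat.log 2 (Fintype.card V), hrank, fun u v huv => ?_, ?_,
    fun v w => h.stack_lt v trivial w trivial, ?_⟩
  · exact (hrank_lt u v).2 (List.cons_lt_cons_iff.2 (Or.inl huv))
  · push_cast
    exact mul_le_mul_of_nonneg_left (Real.natLog_le_logb _ _) (Nat.cast_nonneg ℓ)
  · intro v w x y hvw hxy hlvw hlxy hstack hcross
    simp only [hrank_lt, ← hlvw, ← hlxy, List.cons_crossing_iff] at hcross
    exact h.not_crossing v trivial w trivial x trivial y trivial hvw hxy hlvw hlxy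
      hcross.1 hstack hcross.2

/-- In an `n`-vertex graph with a layered `ℓ`-separator, the intra-layer edges
can be partitioned into at most `ℓ · log₂ n` stacks with respect to a
layer-by-layer vertex ordering. -/
theorem intra_layer_stacks {V : Type*} [Fintype V]
    (G : SimpleGraph V) (ℓ : ℕ) (lay : V → ℕ)
    (hlay : IsLayering G lay) (hsep : HasLayeredSeparator G lay ℓ) :
    ∃ (pos : V → ℕ) (f : Sym2 V → ℕ) (s : ℕ), Function.Injective pos ∧
      (∀ u v : V, lay u < lay v → pos u < pos v) ∧
      (s : ℝ) ≤ ℓ * Real.logb 2 (Fintype.card V) ∧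
      (∀ v w : V, G.Adj v w → lay v = lay w → f s(v, w) < s) ∧
      (∀ v w x y : V, G.Adj v w → G.Adj x y → lay v = lay w → lay x = lay y →
        f s(v, w) = f s(x, y) →
        ¬ (pos v < pos x ∧ pos x < pos w ∧ pos w < pos y)) :=
  intra_layer_stacks_general G ℓ lay hsep
end

section
/- In an n-vertex graph with a layered ℓ-separator, all inter-layer edges can be partitioned into at most 2ℓ · log₂ n queues with respect to the recursively constructed ordering σ^q that, in each layer, lists the separator vertices first followed by the components G_1,...,G_k always in the same order. -/
open Function Set

section Rank

variable {α β : Type*} [Finite α] [LinearOrder β]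

noncomputable def rankIn (e : α → β) (T : Set α) (a : α) : ℕ :=
  (T ∩ {x | e x < e a}).ncard

variable {e : α → β} {T : Set α} {a b : α}

lemma rankIn_lt_rankIn (ha : a ∈ T) (h : e a < e b) : rankIn e T a < rankIn e T b := by
  refine ncard_lt_ncard ⟨fun x hx => ⟨hx.1, lt_trans hx.2 h⟩, fun hsub => ?_⟩ (toFinite _)
  exact lt_irrefl _ (hsub ⟨ha, h⟩).2

lemma lt_of_rankIn_lt (hb : b ∈ T) (h : rankIn e T a < rankIn e T b) : e a < e b := by
  rcases lt_trichotomy (e a) (e b) with hab | hab | hab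
  · exact hab
  · simp [rankIn, hab] at h
  · exact absurd (rankIn_lt_rankIn hb hab) h.not_gt

lemma rankIn_lt_ncard (ha : a ∈ T) : rankIn e T a < T.ncard :=
  ncard_lt_ncard ⟨inter_subset_left, fun hsub => lt_irrefl _ (hsub ha).2⟩ (toFinite _)

lemma rankIn_injOn (he : Injective e) : InjOn (rankIn e T) T := by
  intro a ha b hb h
  by_contra hne
  rcases (he.ne hne).lt_or_gt with hab | hab
  · exact (rankIn_lt_rankIn ha hab).ne h
  · exact (rankIn_lt_rankIn hb hab).ne' h

end Rank

noncomputable def natIndex {α : Type*} [Finite α] (a : α) : ℕ :=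
  Finite.equivFin α a

lemma natIndex_injective {α : Type*} [Finite α] : Injective (natIndex (α := α)) :=
  Fin.val_injective.comp (Finite.equivFin α).injective

def layerLift {V : Type*} (lay : V → ℕ) (g : V → V → ℕ) : Sym2 V → ℕ :=
  Sym2.lift ⟨fun v w => if lay v < lay w then g v w else if lay w < lay v then g w v else 0,
    fun v w => by
      rcases lt_trichotomy (lay v) (lay w) with h | h | h
      · simp [h, h.not_gt]
      · simp [h]
      · simp [h, h.not_gt]⟩

lemma layerLift_mk_of_lt {V : Type*} {lay : V → ℕ} {g : V → V → ℕ} {v w : V}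
    (h : lay v < lay w) : layerLift lay g s(v, w) = g v w := by
  simp [layerLift, h]

/-- A separator `sep U` for every vertex set `U`, and the vertex set `component U v` of the
component of `G[U] - sep U` containing `v`. -/
structure SeparatorHierarchy {V : Type*} (G : SimpleGraph V) (lay : V → ℕ) (ℓ : ℕ) where
  sep : Set V → Set V
  component : Set V → V → Set V
  ncard_sep_inter_layer_le (U : Set V) (i : ℕ) : (sep U ∩ {v | lay v = i}).ncard ≤ ℓ
  mem_component {U : Set V} {v : V} : v ∈ U \ sep U → v ∈ component U v
  two_mul_ncard_component_le {U : Set V} {v : V} :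
    v ∈ U \ sep U → 2 * (component U v).ncard ≤ U.ncard
  component_eq_of_adj {U : Set V} {v w : V} :
    v ∈ U \ sep U → w ∈ U \ sep U → G.Adj v w → component U w = component U v

namespace HasLayeredSeparator

variable {V : Type*} {G : SimpleGraph V} {lay : V → ℕ} {ℓ : ℕ}
  (h : HasLayeredSeparator G lay ℓ)

noncomputable def sep (U : Set V) : Set V :=
  (h ((⊤ : G.Subgraph).induce U)).choose

noncomputable def rest (U : Set V) : G.Subgraph :=
  ((⊤ : G.Subgraph).induce U).deleteVerts (h.sep U)

def component (U : Set V) (v : V) : Set V :=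
  {w | ∃ (hv : v ∈ (h.rest U).verts) (hw : w ∈ (h.rest U).verts),
    (h.rest U).coe.Reachable ⟨v, hv⟩ ⟨w, hw⟩}

variable {h}

lemma verts_rest {U : Set V} : (h.rest U).verts = U \ h.sep U := by
  simp [rest]

lemma component_eq_image_supp {U : Set V} {v : V} (hv : v ∈ (h.rest U).verts) :
    h.component U v = Subtype.val '' ((h.rest U).coe.connectedComponentMk ⟨v, hv⟩).supp := by
  ext w
  simp only [component, mem_ofPred_eq, mem_image, SimpleGraph.ConnectedComponent.mem_supp_iff,
    SimpleGraph.ConnectedComponent.eq, Subtype.exists, exists_and_right, exists_eq_right]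
  exact ⟨fun ⟨_, hw, hr⟩ => ⟨hw, hr.symm⟩, fun ⟨hw, hr⟩ => ⟨hv, hw, hr.symm⟩⟩

lemma rest_adj {U : Set V} {v w : V} (hv : v ∈ (h.rest U).verts) (hw : w ∈ (h.rest U).verts)
    (hvw : G.Adj v w) : (h.rest U).coe.Adj ⟨v, hv⟩ ⟨w, hw⟩ := by
  rw [verts_rest] at hv hw
  simp [rest, hv.1, hv.2, hw.1, hw.2, hvw]

variable (h)

noncomputable def hierarchy : SeparatorHierarchy G lay ℓ where
  sep := h.sep
  component := h.component
  ncard_sep_inter_layer_le U := (h ((⊤ : G.Subgraph).induce U)).choose_spec.2.1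
  mem_component hv := by
    rw [← verts_rest] at hv
    exact ⟨hv, hv, .refl _⟩
  two_mul_ncard_component_le {U v} hv := by
    rw [← verts_rest] at hv
    rw [component_eq_image_supp hv, ncard_image_of_injective _ Subtype.val_injective]
    exact (h ((⊤ : G.Subgraph).induce U)).choose_spec.2.2 _
  component_eq_of_adj {U v w} hv hw hvw := by
    rw [← verts_rest] at hv hw
    have hr := (rest_adj hv hw hvw).reachable
    ext z
    exact ⟨fun ⟨_, hz, hwz⟩ => ⟨hv, hz, hr.trans hwz⟩,
      fun ⟨_, hz, hvz⟩ => ⟨hw, hz, hr.symm.trans hvz⟩⟩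

end HasLayeredSeparator

namespace SeparatorHierarchy

variable {V : Type*} [Finite V] {G : SimpleGraph V} {lay : V → ℕ} {ℓ : ℕ}
  (H : SeparatorHierarchy G lay ℓ)

lemma ncard_component_lt {U : Set V} {v : V} (hv : v ∈ U \ H.sep U) :
    (H.component U v).ncard < U.ncard := by
  have hpos : 0 < (H.component U v).ncard := (ncard_pos (toFinite _)).2 ⟨v, H.mem_component hv⟩
  have := H.two_mul_ncard_component_le hv
  omega

open scoped Classical in
/-- The tag `0` puts the separator of `U` first; `natIndex v` only breaks ties inside it. -/
noncomputable def key (U : Set V) (v : V) : List ℕ :=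
  if hv : v ∈ U \ H.sep U then (natIndex (H.component U v) + 1) :: key (H.component U v) v
  else [0, natIndex v]
termination_by U.ncard
decreasing_by exact H.ncard_component_lt hv

variable {H}

lemma key_of_mem_diff {U : Set V} {v : V} (hv : v ∈ U \ H.sep U) :
    H.key U v = (natIndex (H.component U v) + 1) :: H.key (H.component U v) v := by
  rw [key, dif_pos hv]

lemma key_of_notMem_diff {U : Set V} {v : V} (hv : v ∉ U \ H.sep U) :
    H.key U v = [0, natIndex v] := by
  rw [key, dif_neg hv]

lemma key_injective (U : Set V) : Injective (H.key U) := by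
  induction hn : U.ncard using Nat.strong_induction_on generalizing U with
  | _ n ih =>
  intro v w hvw
  by_cases hv : v ∈ U \ H.sep U <;> by_cases hw : w ∈ U \ H.sep U
  · rw [key_of_mem_diff hv, key_of_mem_diff hw, List.cons.injEq] at hvw
    have hC : H.component U v = H.component U w := natIndex_injective (by omega)
    rw [hC] at hvw
    exact ih _ (hn ▸ H.ncard_component_lt hw) _ rfl hvw.2
  · simp [key_of_mem_diff hv, key_of_notMem_diff hw] at hvw
  · simp [key_of_notMem_diff hv, key_of_mem_diff hw] at hvw
  · rw [key_of_notMem_diff hv, key_of_notMem_diff hw] at hvw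
    exact natIndex_injective (List.cons.inj (List.cons.inj hvw).2).1

variable (H) in
noncomputable def sepRank (U : Set V) (u : V) : ℕ :=
  rankIn natIndex (H.sep U ∩ {x | lay x = lay u}) u

lemma sepRank_lt {U : Set V} {u : V} (hu : u ∈ H.sep U) : H.sepRank U u < ℓ :=
  calc H.sepRank U u < (H.sep U ∩ {x | lay x = lay u}).ncard := rankIn_lt_ncard ⟨hu, rfl⟩
    _ ≤ ℓ := H.ncard_sep_inter_layer_le U (lay u)

lemma eq_of_sepRank_eq {U : Set V} {u u' : V} (hu : u ∈ H.sep U) (hu' : u' ∈ H.sep U)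
    (hl : lay u = lay u') (h : H.sepRank U u = H.sepRank U u') : u = u' := by
  rw [sepRank, sepRank, hl] at h
  exact rankIn_injOn (T := H.sep U ∩ {x | lay x = lay u'}) natIndex_injective
    ⟨hu, hl⟩ ⟨hu', rfl⟩ h

variable (H) in
open scoped Classical in
noncomputable def queue (U : Set V) (v w : V) : ℕ :=
  if _ : v ∈ U \ H.sep U then
    if w ∈ U \ H.sep U then 2 * ℓ + queue (H.component U v) v w else ℓ + H.sepRank U w
  else H.sepRank U v
termination_by U.ncard
decreasing_by exact H.ncard_component_lt ‹_›

lemma queue_of_mem_sep {U : Set V} {v w : V} (hv : v ∈ H.sep U) :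
    H.queue U v w = H.sepRank U v := by
  rw [queue, dif_neg fun h => h.2 hv]

lemma queue_of_mem_diff_of_notMem_diff {U : Set V} {v w : V} (hv : v ∈ U \ H.sep U)
    (hw : w ∉ U \ H.sep U) : H.queue U v w = ℓ + H.sepRank U w := by
  rw [queue, dif_pos hv, if_neg hw]

lemma queue_of_mem_diff {U : Set V} {v w : V} (hv : v ∈ U \ H.sep U) (hw : w ∈ U \ H.sep U) :
    H.queue U v w = 2 * ℓ + H.queue (H.component U v) v w := by
  rw [queue, dif_pos hv, if_pos hw]

lemma mem_sep_iff_queue_lt {U : Set V} {v w : V} (hv : v ∈ U) :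
    v ∈ H.sep U ↔ H.queue U v w < ℓ := by
  refine ⟨fun hvs => (queue_of_mem_sep hvs).trans_lt (sepRank_lt hvs), fun hq => ?_⟩
  by_contra hvs
  by_cases hw : w ∈ U \ H.sep U
  · rw [queue_of_mem_diff ⟨hv, hvs⟩ hw] at hq
    omega
  · rw [queue_of_mem_diff_of_notMem_diff ⟨hv, hvs⟩ hw] at hq
    omega

lemma mem_sep_iff_queue_lt_two_mul {U : Set V} {v w : V} (hv : v ∈ U \ H.sep U) (hw : w ∈ U) :
    w ∈ H.sep U ↔ H.queue U v w < 2 * ℓ := by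
  refine ⟨fun hws => ?_, fun hq => ?_⟩
  · rw [queue_of_mem_diff_of_notMem_diff hv fun h => h.2 hws]
    have := sepRank_lt hws
    omega
  · by_contra hws
    rw [queue_of_mem_diff hv ⟨hw, hws⟩] at hq
    omega

lemma queue_lt {U : Set V} {v w : V} (hv : v ∈ U) (hw : w ∈ U) (hvw : G.Adj v w) :
    H.queue U v w < 2 * ℓ * Nat.log 2 U.ncard := by
  induction hn : U.ncard using Nat.strong_induction_on generalizing U with
  | _ n ih =>
  have hlog : 1 ≤ Nat.log 2 n := by
    have : 1 < U.ncard := (one_lt_ncard (toFinite U)).2 ⟨v, hv, w, hw, hvw.ne⟩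
    exact Nat.le_log_of_pow_le one_lt_two (by omega)
  have h2ℓ : 2 * ℓ ≤ 2 * ℓ * Nat.log 2 n := Nat.le_mul_of_pos_right _ hlog
  by_cases hvs : v ∈ H.sep U
  · have := (mem_sep_iff_queue_lt hv (w := w)).1 hvs
    omega
  have hv' : v ∈ U \ H.sep U := ⟨hv, hvs⟩
  by_cases hws : w ∈ H.sep U
  · have := (mem_sep_iff_queue_lt_two_mul hv' hw).1 hws
    omega
  have hw' : w ∈ U \ H.sep U := ⟨hw, hws⟩
  have hvC : v ∈ H.component U v := H.mem_component hv'
  have hwC : w ∈ H.component U v := H.component_eq_of_adj hv' hw' hvw ▸ H.mem_component hw'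
  have hlogC : Nat.log 2 (H.component U v).ncard + 1 ≤ Nat.log 2 n := by
    rw [← Nat.log_mul_base one_lt_two ((ncard_pos (toFinite _)).2 ⟨v, hvC⟩).ne']
    exact Nat.log_mono_right (by have := H.two_mul_ncard_component_le hv'; omega)
  have hrec := ih _ (hn ▸ H.ncard_component_lt hv') hvC hwC rfl
  calc H.queue U v w = 2 * ℓ + H.queue (H.component U v) v w := queue_of_mem_diff hv' hw'
    _ < 2 * ℓ + 2 * ℓ * Nat.log 2 (H.component U v).ncard := by omega
    _ = 2 * ℓ * (Nat.log 2 (H.component U v).ncard + 1) := by ring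
    _ ≤ 2 * ℓ * Nat.log 2 n := Nat.mul_le_mul_left _ hlogC

lemma key_not_nested {U : Set V} {v w x y : V} (hv : v ∈ U) (hw : w ∈ U) (hx : x ∈ U)
    (hy : y ∈ U) (hvw : G.Adj v w) (hxy : G.Adj x y) (hvx : lay v = lay x) (hwy : lay w = lay y)
    (hq : H.queue U v w = H.queue U x y) (hkey : H.key U v < H.key U x) :
    ¬ H.key U y < H.key U w := by
  induction hn : U.ncard using Nat.strong_induction_on generalizing U with
  | _ n ih =>
  have hsep_vx : v ∈ H.sep U ↔ x ∈ H.sep U := by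
    rw [mem_sep_iff_queue_lt hv, mem_sep_iff_queue_lt hx, hq]
  by_cases hvs : v ∈ H.sep U
  · have hxs := hsep_vx.1 hvs
    rw [queue_of_mem_sep hvs, queue_of_mem_sep hxs] at hq
    obtain rfl := eq_of_sepRank_eq hvs hxs hvx hq
    exact absurd hkey (lt_irrefl _)
  have hv' : v ∈ U \ H.sep U := ⟨hv, hvs⟩
  have hx' : x ∈ U \ H.sep U := ⟨hx, mt hsep_vx.2 hvs⟩
  have hsep_wy : w ∈ H.sep U ↔ y ∈ H.sep U := by
    rw [mem_sep_iff_queue_lt_two_mul hv' hw, mem_sep_iff_queue_lt_two_mul hx' hy, hq]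
  by_cases hws : w ∈ H.sep U
  · have hys := hsep_wy.1 hws
    rw [queue_of_mem_diff_of_notMem_diff hv' fun h => h.2 hws,
      queue_of_mem_diff_of_notMem_diff hx' fun h => h.2 hys] at hq
    obtain rfl := eq_of_sepRank_eq hws hys hwy (Nat.add_left_cancel hq)
    exact lt_irrefl _
  have hw' : w ∈ U \ H.sep U := ⟨hw, hws⟩
  have hy' : y ∈ U \ H.sep U := ⟨hy, mt hsep_wy.2 hws⟩
  have hCw := H.component_eq_of_adj hv' hw' hvw
  have hCy := H.component_eq_of_adj hx' hy' hxy
  rw [key_of_mem_diff hv', key_of_mem_diff hx'] at hkey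
  rw [key_of_mem_diff hy', key_of_mem_diff hw', hCw, hCy]
  rw [queue_of_mem_diff hv' hw', queue_of_mem_diff hx' hy'] at hq
  rcases List.cons_lt_cons_iff.1 hkey with hlt | ⟨heq, hlt⟩
  · intro h
    rcases List.cons_lt_cons_iff.1 h with h | ⟨h, -⟩ <;> omega
  have hC : H.component U x = H.component U v := natIndex_injective (by omega)
  rw [hC] at hlt hq ⊢
  intro h
  exact ih _ (hn ▸ H.ncard_component_lt hv') (H.mem_component hv') (hCw ▸ H.mem_component hw')
    (hC ▸ H.mem_component hx') (hCy.trans hC ▸ H.mem_component hy') (by omega) hlt rfl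
    ((List.cons_lt_cons_iff.1 h).resolve_left (lt_irrefl _)).2

variable (H) in
/-- `σ^q` orders the vertices by this key. -/
noncomputable def sortKey (v : V) : ℕ ×ₗ List ℕ :=
  toLex (lay v, H.key univ v)

variable (H) in
noncomputable def pos : V → ℕ :=
  rankIn H.sortKey univ

lemma sortKey_injective : Injective H.sortKey :=
  fun _ _ h => H.key_injective univ (congrArg (fun p => (ofLex p).2) h)

lemma pos_injective : Injective H.pos :=
  injOn_univ.1 (rankIn_injOn sortKey_injective)

lemma pos_lt_pos_of_lay_lt {u v : V} (h : lay u < lay v) : H.pos u < H.pos v :=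
  rankIn_lt_rankIn (mem_univ u) (Prod.Lex.lt_iff.2 (Or.inl h))

lemma lay_le_of_pos_lt {u v : V} (h : H.pos u < H.pos v) : lay u ≤ lay v := by
  rcases Prod.Lex.lt_iff.1 (lt_of_rankIn_lt (mem_univ v) h) with h | ⟨h, -⟩
  exacts [h.le, h.le]

lemma key_lt_of_pos_lt {u v : V} (h : H.pos u < H.pos v) (hl : lay u = lay v) :
    H.key univ u < H.key univ v := by
  rcases Prod.Lex.lt_iff.1 (lt_of_rankIn_lt (mem_univ v) h) with h | ⟨-, h⟩
  exacts [absurd hl h.ne, h]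

lemma pos_not_nested (hlay : IsLayering G lay) {v w x y : V} (hvw : G.Adj v w) (hxy : G.Adj x y)
    (hxy' : lay x ≠ lay y)
    (hq : layerLift lay (H.queue univ) s(v, w) = layerLift lay (H.queue univ) s(x, y)) :
    ¬ (H.pos v < H.pos x ∧ H.pos x < H.pos y ∧ H.pos y < H.pos w) := by
  rintro ⟨hposvx, hposxy, hposyw⟩
  have := lay_le_of_pos_lt hposvx
  have := lay_le_of_pos_lt hposxy
  have := lay_le_of_pos_lt hposyw
  have := hlay v w hvw
  have := hlay x y hxy
  have hvx : lay v = lay x := by omega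
  have hwy : lay w = lay y := by omega
  rw [layerLift_mk_of_lt (by omega), layerLift_mk_of_lt (by omega)] at hq
  exact key_not_nested (mem_univ v) (mem_univ w) (mem_univ x) (mem_univ y) hvw hxy hvx hwy hq
    (key_lt_of_pos_lt hposvx hvx) (key_lt_of_pos_lt hposyw hwy.symm)

end SeparatorHierarchy

/-- In an `n`-vertex graph with a layered `ℓ`-separator, all inter-layer edges
can be partitioned into at most `2ℓ · log₂ n` queues with respect to a
layer-by-layer vertex ordering. -/
theorem inter_layer_queues {V : Type*} [Fintype V]
    (G : SimpleGraph V) (ℓ : ℕ) (lay : V → ℕ)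
    (hlay : IsLayering G lay) (hsep : HasLayeredSeparator G lay ℓ) :
    ∃ (pos : V → ℕ) (f : Sym2 V → ℕ) (q : ℕ), Function.Injective pos ∧
      (∀ u v : V, lay u < lay v → pos u < pos v) ∧
      (q : ℝ) ≤ 2 * ℓ * Real.logb 2 (Fintype.card V) ∧
      (∀ v w : V, G.Adj v w → lay v ≠ lay w → f s(v, w) < q) ∧
      (∀ v w x y : V, G.Adj v w → G.Adj x y → lay v ≠ lay w → lay x ≠ lay y →
        f s(v, w) = f s(x, y) →
        ¬ (pos v < pos x ∧ pos x < pos y ∧ pos y < pos w)) := by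
  let H := hsep.hierarchy
  have hcard : (univ : Set V).ncard = Fintype.card V := by
    rw [ncard_univ, Nat.card_eq_fintype_card]
  refine ⟨H.pos, layerLift lay (H.queue univ), 2 * ℓ * Nat.log 2 (Fintype.card V),
    H.pos_injective, fun _ _ => H.pos_lt_pos_of_lay_lt, ?_, ?_,
    fun _ _ _ _ hvw hxy _ hxy' hq => H.pos_not_nested hlay hvw hxy hxy' hq⟩
  · push_cast
    exact mul_le_mul_of_nonneg_left (Real.natLog_le_logb _ _) (by positivity)
  · intro v w hvw hne
    rw [← hcard]
    rcases hne.lt_or_gt with h | h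
    · rw [layerLift_mk_of_lt h]
      exact H.queue_lt (mem_univ v) (mem_univ w) hvw
    · rw [Sym2.eq_swap, layerLift_mk_of_lt h]
      exact H.queue_lt (mem_univ w) (mem_univ v) hvw.symm
end

section
/- If a graph G has layered treewidth at most ℓ with respect to a layering, then G has a layered ℓ-separator with respect to the same layering. -/
/-!
Removing the bag of a node `a` from a subgraph `G'` leaves pieces that each live beyond a single
neighbour `b` of `a`: the nodes whose bags contain a vertex form a subtree, which avoids `a` when
the vertex is not in the bag of `a`, and adjacent vertices share a bag. So it suffices to find a
node `a` such that, for each neighbour `b`, at most half of `V(G')` has all its bags beyond `b`.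
If there is none, step from a node into a heavy branch and repeat. Since two opposite branches
cannot both be heavy, this never turns back, so the vertex sets beyond the current edge are nested
and nonempty while the total tree distance from the current node to a bag of each of them
strictly drops, which cannot go on forever (the tree itself may be infinite).
-/

namespace SimpleGraph

variable {V β : Type*}

lemma Reachable.mem_of_adj_mem {G : SimpleGraph V} {s : Set V}
    (hs : ∀ ⦃u v⦄, G.Adj u v → u ∈ s → v ∈ s) {u v : V} (h : G.Reachable u v) (hu : u ∈ s) :
    v ∈ s := by
  rw [reachable_iff_reflTransGen] at h
  induction h with
  | refl => exact hu
  | tail _ hvw ih => exact hs hvw ih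

/-- In a tree: the nodes of the subtree hanging off `a` at its neighbour `b`. -/
def branch (T : SimpleGraph β) (a b : β) : Set β :=
  {t | (T.deleteEdges {s(a, b)}).Reachable t b}

section Branch

variable {T : SimpleGraph β} {a b c t : β}

lemma IsAcyclic.not_reachable_deleteEdges (hT : T.IsAcyclic) (hab : T.Adj a b) :
    ¬ (T.deleteEdges {s(a, b)}).Reachable a b :=
  isBridge_iff.mp (isAcyclic_iff_forall_adj_isBridge.mp hT hab)

lemma IsAcyclic.disjoint_branch (hT : T.IsAcyclic) (hab : T.Adj a b) :
    Disjoint (T.branch a b) (T.branch b a) := by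
  refine Set.disjoint_left.mpr fun t htb hta => hT.not_reachable_deleteEdges hab ?_
  change (T.deleteEdges {s(b, a)}).Reachable t a at hta
  rw [Sym2.eq_swap] at hta
  exact hta.symm.trans htb

lemma IsAcyclic.mem_edges_of_mem_branch (hT : T.IsAcyclic) (hab : T.Adj a b)
    (ht : t ∈ T.branch a b) (p : T.Walk a t) : s(a, b) ∈ p.edges := by
  by_contra hp
  exact hT.not_reachable_deleteEdges hab
    ((reachable_deleteEdges_iff_exists_walk.mpr ⟨p, hp⟩).trans ht)

lemma IsAcyclic.dist_lt_of_mem_branch (hT : T.IsAcyclic) (hab : T.Adj a b)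
    (ht : t ∈ T.branch a b) : T.dist b t < T.dist a t := by
  classical
  obtain ⟨p, hp⟩ :=
    (hab.reachable.trans (ht.symm.mono (deleteEdges_le _))).exists_walk_length_eq_dist
  have hb : b ∈ p.support := p.snd_mem_support_of_mem_edges (hT.mem_edges_of_mem_branch hab ht p)
  have hsplit := congrArg Walk.length (p.take_spec hb)
  rw [Walk.length_append] at hsplit
  have hfirst : (p.takeUntil b hb).length ≠ 0 := fun h => hab.ne (Walk.eq_of_length_eq_zero h)
  have := T.dist_le (p.dropUntil b hb)
  omega

lemma IsAcyclic.branch_subset_branch (hT : T.IsAcyclic) (hbc : T.Adj b c) (hca : c ≠ a) :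
    T.branch b c ⊆ T.branch a b := by
  classical
  intro t ht
  obtain ⟨q, hq⟩ := reachable_deleteEdges_iff_exists_walk.mp ht
  -- `q` avoids `bc`, so it cannot pass through `b` on its way to `c`; in particular it avoids `ab`.
  have hq' : s(a, b) ∉ q.edges := fun h => hT.not_reachable_deleteEdges hbc <|
    reachable_deleteEdges_iff_exists_walk.mpr
      ⟨q.dropUntil b (q.snd_mem_support_of_mem_edges h),
        fun h' => hq (q.edges_dropUntil_subset_edges _ h')⟩
  have hcb : (T.deleteEdges {s(a, b)}).Adj c b := by
    simp [deleteEdges_adj, hbc.symm, hca, hbc.ne.symm]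
  exact (reachable_deleteEdges_iff_exists_walk.mpr ⟨q, hq'⟩).trans hcb.reachable

lemma Reachable.exists_adj_mem_branch (h : T.Reachable a t) (hta : t ≠ a) :
    ∃ b, T.Adj a b ∧ t ∈ T.branch a b := by
  obtain ⟨p, hp⟩ := h.exists_isPath
  cases p with
  | nil => exact absurd rfl hta
  | cons hab q =>
    refine ⟨_, hab, reachable_deleteEdges_iff_exists_walk.mpr ⟨q.reverse, fun he => ?_⟩⟩
    rw [Walk.edges_reverse, List.mem_reverse] at he
    exact ((Walk.cons_isPath_iff hab q).mp hp).2 (q.fst_mem_support_of_mem_edges he)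

lemma Preconnected.subset_branch {B : Set β} (hB : (T.induce B).Preconnected) (ha : a ∉ B)
    (ht : t ∈ B) (htb : t ∈ T.branch a b) : B ⊆ T.branch a b := by
  let f : T.induce B →g T.deleteEdges {s(a, b)} :=
    { toFun := Subtype.val
      map_rel' := fun {x y} hxy => (deleteEdges_adj ..).mpr ⟨hxy, fun he => ha ?_⟩ }
  · exact fun s hs => ((hB ⟨s, hs⟩ ⟨t, ht⟩).map f).trans htb
  · rcases Sym2.eq_iff.mp (Set.mem_singleton_iff.mp he) with ⟨rfl, -⟩ | ⟨-, rfl⟩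
    · exact x.2
    · exact y.2

end Branch

structure TreeDecomposition (G : SimpleGraph V) (β : Type*) where
  tree : SimpleGraph β
  bag : β → Set V
  isTree : tree.IsTree
  exists_mem_bag : ∀ v, ∃ t, v ∈ bag t
  exists_mem_bag_of_adj : ∀ u v, G.Adj u v → ∃ t, u ∈ bag t ∧ v ∈ bag t
  connected_bags : ∀ v, (tree.induce {t | v ∈ bag t}).Connected

namespace TreeDecomposition

variable {G : SimpleGraph V} (D : G.TreeDecomposition β) {a b c t : β} {u v : V}

def branchVerts (a b : β) : Set V :=
  {v | ∀ t, v ∈ D.bag t → t ∈ D.tree.branch a b}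

lemma disjoint_branchVerts (hab : D.tree.Adj a b) :
    Disjoint (D.branchVerts a b) (D.branchVerts b a) := by
  refine Set.disjoint_left.mpr fun v hvab hvba => ?_
  obtain ⟨t, ht⟩ := D.exists_mem_bag v
  exact Set.disjoint_left.mp (D.isTree.isAcyclic.disjoint_branch hab) (hvab t ht) (hvba t ht)

lemma branchVerts_subset_branchVerts (hbc : D.tree.Adj b c) (hca : c ≠ a) :
    D.branchVerts b c ⊆ D.branchVerts a b :=
  fun _ hv t ht => D.isTree.isAcyclic.branch_subset_branch hbc hca (hv t ht)

lemma dist_lt_of_mem_branchVerts (hab : D.tree.Adj a b) (hv : v ∈ D.branchVerts a b)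
    (ht : v ∈ D.bag t) : D.tree.dist b t < D.tree.dist a t :=
  D.isTree.isAcyclic.dist_lt_of_mem_branch hab (hv t ht)

lemma exists_mem_branchVerts (hv : v ∉ D.bag a) :
    ∃ b, D.tree.Adj a b ∧ v ∈ D.branchVerts a b := by
  obtain ⟨t, ht⟩ := D.exists_mem_bag v
  obtain ⟨b, hab, htb⟩ := (D.isTree.connected a t).exists_adj_mem_branch fun h => hv (h ▸ ht)
  exact ⟨b, hab, fun s hs => (D.connected_bags v).preconnected.subset_branch hv ht htb hs⟩

lemma mem_branchVerts_of_adj (hu : u ∈ D.branchVerts a b) (huv : G.Adj u v) (hv : v ∉ D.bag a) :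
    v ∈ D.branchVerts a b := by
  obtain ⟨t, hut, hvt⟩ := D.exists_mem_bag_of_adj u v huv
  exact fun s hs => (D.connected_bags v).preconnected.subset_branch hv hvt (hu t hut) hs

lemma exists_supp_subset_branchVerts (G' : G.Subgraph) (a : β)
    (C : (G'.deleteVerts (D.bag a)).coe.ConnectedComponent) :
    ∃ b, D.tree.Adj a b ∧ Subtype.val '' C.supp ⊆ G'.verts ∩ D.branchVerts a b := by
  obtain ⟨x, rfl⟩ := C.exists_rep
  obtain ⟨b, hab, hx⟩ := D.exists_mem_branchVerts x.2.2
  refine ⟨b, hab, ?_⟩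
  rintro _ ⟨y, hy, rfl⟩
  refine ⟨y.2.1, (ConnectedComponent.exact hy).symm.mem_of_adj_mem
    (s := Subtype.val ⁻¹' D.branchVerts a b) (fun z w hzw hz => ?_) hx⟩
  exact D.mem_branchVerts_of_adj hz (Subgraph.coe_adj_sub _ _ _ hzw) w.2.2

lemma ncard_inter_branchVerts_add_le [Finite V] (U : Set V) (hab : D.tree.Adj a b) :
    (U ∩ D.branchVerts a b).ncard + (U ∩ D.branchVerts b a).ncard ≤ U.ncard := by
  rw [← Set.ncard_union_eq ((D.disjoint_branchVerts hab).mono Set.inter_subset_right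
    Set.inter_subset_right)]
  exact Set.ncard_le_ncard (Set.union_subset Set.inter_subset_left Set.inter_subset_left)

lemma exists_balanced_node [Finite V] (U : Set V) :
    ∃ a, ∀ b, D.tree.Adj a b → 2 * (U ∩ D.branchVerts a b).ncard ≤ U.ncard := by
  classical
  have := Fintype.ofFinite V
  by_contra! heavy
  choose home hhome using D.exists_mem_bag
  let μ (a b : β) : ℕ := ∑ v ∈ (U ∩ D.branchVerts a b).toFinset, D.tree.dist a (home v)
  have hdescend : ∀ a b, D.tree.Adj a b → U.ncard < 2 * (U ∩ D.branchVerts a b).ncard →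
      ∃ c, D.tree.Adj b c ∧ U.ncard < 2 * (U ∩ D.branchVerts b c).ncard ∧ μ b c < μ a b := by
    intro a b hab hheavy
    obtain ⟨c, hbc, hc⟩ := heavy b
    have hca : c ≠ a := by
      rintro rfl
      have := D.ncard_inter_branchVerts_add_le U hab
      omega
    have hsub : U ∩ D.branchVerts b c ⊆ U ∩ D.branchVerts a b :=
      Set.inter_subset_inter_right _ (D.branchVerts_subset_branchVerts hbc hca)
    have hne : (U ∩ D.branchVerts b c).toFinset.Nonempty :=
      Set.toFinset_nonempty.mpr (Set.nonempty_of_ncard_ne_zero (by omega))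
    refine ⟨c, hbc, hc, ?_⟩
    calc μ b c < ∑ v ∈ (U ∩ D.branchVerts b c).toFinset, D.tree.dist a (home v) :=
          Finset.sum_lt_sum_of_nonempty hne fun v hv =>
            D.dist_lt_of_mem_branchVerts hab (hsub (Set.mem_toFinset.mp hv)).2 (hhome v)
      _ ≤ μ a b := Finset.sum_le_sum_of_subset (Set.toFinset_subset_toFinset.mpr hsub)
  obtain ⟨a₀⟩ := D.isTree.connected.nonempty
  obtain ⟨b₀, hab₀, hb₀⟩ := heavy a₀
  obtain ⟨⟨a, b⟩, ⟨hab, hb⟩, hmin⟩ := (measure fun p : β × β => μ p.1 p.2).wf.has_min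
    {p | D.tree.Adj p.1 p.2 ∧ U.ncard < 2 * (U ∩ D.branchVerts p.1 p.2).ncard}
    ⟨(a₀, b₀), hab₀, hb₀⟩
  obtain ⟨c, hbc, hc, hlt⟩ := hdescend a b hab hb
  exact hmin (b, c) ⟨hbc, hc⟩ hlt

lemma exists_balanced_bag [Finite V] (G' : G.Subgraph) :
    ∃ a, ∀ C : (G'.deleteVerts (D.bag a)).coe.ConnectedComponent,
      2 * C.supp.ncard ≤ G'.verts.ncard := by
  obtain ⟨a, ha⟩ := D.exists_balanced_node G'.verts
  refine ⟨a, fun C => ?_⟩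
  obtain ⟨b, hab, hC⟩ := D.exists_supp_subset_branchVerts G' a C
  calc 2 * C.supp.ncard = 2 * (Subtype.val '' C.supp).ncard := by
        rw [Set.ncard_image_of_injective _ Subtype.val_injective]
    _ ≤ 2 * (G'.verts ∩ D.branchVerts a b).ncard := Nat.mul_le_mul_left _ (Set.ncard_le_ncard hC)
    _ ≤ G'.verts.ncard := ha b hab

end TreeDecomposition

end SimpleGraph

theorem layered_treewidth_gives_layered_separator_general {V : Type*} [Fintype V]
    (G : SimpleGraph V) (lay : V → ℕ) (ℓ : ℕ)
    (h : ∃ (β : Type) (T : SimpleGraph β) (bag : β → Set V),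
      T.IsTree ∧
      (∀ v : V, ∃ b, v ∈ bag b) ∧
      (∀ u v : V, G.Adj u v → ∃ b, u ∈ bag b ∧ v ∈ bag b) ∧
      (∀ v : V, (T.induce {b | v ∈ bag b}).Connected) ∧
      (∀ b, ∀ i : ℕ, (bag b ∩ {v | lay v = i}).ncard ≤ ℓ)) :
    HasLayeredSeparator G lay ℓ := by
  obtain ⟨β, T, bag, hT, hcover, hedge, hconn, hwidth⟩ := h
  let D : G.TreeDecomposition β := ⟨T, bag, hT, hcover, hedge, hconn⟩
  intro G'
  obtain ⟨a, ha⟩ := D.exists_balanced_bag G'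
  refine ⟨G'.verts ∩ bag a, Set.inter_subset_left, fun i => ?_, ?_⟩
  · exact (Set.ncard_le_ncard (Set.inter_subset_inter_left _ Set.inter_subset_right)).trans
      (hwidth a i)
  · rwa [SimpleGraph.Subgraph.deleteVerts_inter_verts_left_eq]

/-- If `G` has a tree decomposition in which every bag contains at most `ℓ`
vertices of each layer (i.e. layered treewidth at most `ℓ`), then `G` has a
layered `ℓ`-separator with respect to the same layering. -/
theorem layered_treewidth_gives_layered_separator {V : Type*} [Fintype V]
    (G : SimpleGraph V) (lay : V → ℕ) (ℓ : ℕ) (hlay : IsLayering G lay)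
    (h : ∃ (β : Type) (T : SimpleGraph β) (bag : β → Set V),
      T.IsTree ∧
      (∀ v : V, ∃ b, v ∈ bag b) ∧
      (∀ u v : V, G.Adj u v → ∃ b, u ∈ bag b ∧ v ∈ bag b) ∧
      (∀ v : V, (T.induce {b | v ∈ bag b}).Connected) ∧
      (∀ b, ∀ i : ℕ, (bag b ∩ {v | lay v = i}).ncard ≤ ℓ)) :
    HasLayeredSeparator G lay ℓ :=
  layered_treewidth_gives_layered_separator_general G lay ℓ h
end

section
/- The complete graph K_n is a minor of the n × n × 2 grid graph; hence the class of 1-planar graphs is not closed under taking minors. -/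
open SimpleGraph

/-- `H` is a minor of `G`: there are nonempty, pairwise disjoint, connected
branch sets in `G`, one per vertex of `H`, with an edge of `G` between the
branch sets of any two adjacent vertices of `H`. -/
def IsMinor {α β : Type*} (H : SimpleGraph α) (G : SimpleGraph β) : Prop :=
  ∃ B : α → Set β,
    (∀ a, (B a).Nonempty) ∧
    (∀ a, (G.induce (B a)).Connected) ∧
    (Pairwise fun a a' => Disjoint (B a) (B a')) ∧
    (∀ a a', H.Adj a a' → ∃ x ∈ B a, ∃ y ∈ B a', G.Adj x y)

/-- The complete graph `K_n` is a minor of the `n × n × 2` grid graph. -/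
theorem completeGraph_isMinor_grid (n : ℕ) :
    IsMinor (completeGraph (Fin n))
      ((pathGraph n □ pathGraph n) □ pathGraph 2) := by
  classical
  set G := (pathGraph n □ pathGraph n) □ pathGraph 2 with hG
  set B : Fin n → Set ((Fin n × Fin n) × Fin 2) :=
    fun i => {v | (v.1.1 = i ∧ v.2 = 0) ∨ (v.1.2 = i ∧ v.2 = 1)} with hB
  have h01 : (pathGraph 2).Adj 0 1 := by
    rw [pathGraph_adj]; left; rfl
  refine ⟨B, ?_, ?_, ?_, ?_⟩
  · intro i
    exact ⟨((i, i), 0), Or.inl ⟨rfl, rfl⟩⟩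
  · intro i
    have corner : ((i, i), (0 : Fin 2)) ∈ B i := Or.inl ⟨rfl, rfl⟩
    -- row lemma
    have row : ∀ d : ℕ, ∀ j : Fin n, ((j : ℕ) = i + d ∨ (i : ℕ) = j + d) →
        (G.induce (B i)).Reachable ⟨((i, j), 0), Or.inl ⟨rfl, rfl⟩⟩ ⟨((i, i), 0), corner⟩ := by
      intro d
      induction d with
      | zero =>
        intro j hj
        have : j = i := Fin.ext (by omega)
        subst this
        exact Reachable.refl _
      | succ d ih =>
        intro j hj
        rcases hj with h | h
        · have hjn : (j : ℕ) - 1 < n := by omega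
          set j' : Fin n := ⟨(j : ℕ) - 1, hjn⟩ with hj'
          have hadj : (G.induce (B i)).Adj ⟨((i, j), 0), Or.inl ⟨rfl, rfl⟩⟩
              ⟨((i, j'), 0), Or.inl ⟨rfl, rfl⟩⟩ := by
            show G.Adj ((i, j), 0) ((i, j'), 0)
            rw [hG, boxProd_adj]
            left
            refine ⟨?_, rfl⟩
            rw [boxProd_adj]
            right
            exact ⟨pathGraph_adj.mpr (Or.inr (by simp [hj']; omega)), rfl⟩
          exact hadj.reachable.trans (ih j' (Or.inl (by simp [hj']; omega)))
        · have hjn : (j : ℕ) + 1 < n := by omega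
          set j' : Fin n := ⟨(j : ℕ) + 1, hjn⟩ with hj'
          have hadj : (G.induce (B i)).Adj ⟨((i, j), 0), Or.inl ⟨rfl, rfl⟩⟩
              ⟨((i, j'), 0), Or.inl ⟨rfl, rfl⟩⟩ := by
            show G.Adj ((i, j), 0) ((i, j'), 0)
            rw [hG, boxProd_adj]
            left
            refine ⟨?_, rfl⟩
            rw [boxProd_adj]
            right
            exact ⟨pathGraph_adj.mpr (Or.inl (by simp [hj'])), rfl⟩
          exact hadj.reachable.trans (ih j' (Or.inr (by simp [hj']; omega)))
    -- column lemma
    have col : ∀ d : ℕ, ∀ j : Fin n, ((j : ℕ) = i + d ∨ (i : ℕ) = j + d) →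
        (G.induce (B i)).Reachable ⟨((j, i), 1), Or.inr ⟨rfl, rfl⟩⟩
          ⟨((i, i), 1), Or.inr ⟨rfl, rfl⟩⟩ := by
      intro d
      induction d with
      | zero =>
        intro j hj
        have : j = i := Fin.ext (by omega)
        subst this
        exact Reachable.refl _
      | succ d ih =>
        intro j hj
        rcases hj with h | h
        · have hjn : (j : ℕ) - 1 < n := by omega
          set j' : Fin n := ⟨(j : ℕ) - 1, hjn⟩ with hj'
          have hadj : (G.induce (B i)).Adj ⟨((j, i), 1), Or.inr ⟨rfl, rfl⟩⟩
              ⟨((j', i), 1), Or.inr ⟨rfl, rfl⟩⟩ := by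
            show G.Adj ((j, i), 1) ((j', i), 1)
            rw [hG, boxProd_adj]
            left
            refine ⟨?_, rfl⟩
            rw [boxProd_adj]
            left
            exact ⟨pathGraph_adj.mpr (Or.inr (by simp [hj']; omega)), rfl⟩
          exact hadj.reachable.trans (ih j' (Or.inl (by simp [hj']; omega)))
        · have hjn : (j : ℕ) + 1 < n := by omega
          set j' : Fin n := ⟨(j : ℕ) + 1, hjn⟩ with hj'
          have hadj : (G.induce (B i)).Adj ⟨((j, i), 1), Or.inr ⟨rfl, rfl⟩⟩
              ⟨((j', i), 1), Or.inr ⟨rfl, rfl⟩⟩ := by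
            show G.Adj ((j, i), 1) ((j', i), 1)
            rw [hG, boxProd_adj]
            left
            refine ⟨?_, rfl⟩
            rw [boxProd_adj]
            left
            exact ⟨pathGraph_adj.mpr (Or.inl (by simp [hj'])), rfl⟩
          exact hadj.reachable.trans (ih j' (Or.inr (by simp [hj']; omega)))
    have link : (G.induce (B i)).Adj ⟨((i, i), 1), Or.inr ⟨rfl, rfl⟩⟩ ⟨((i, i), 0), corner⟩ := by
      show G.Adj ((i, i), 1) ((i, i), 0)
      rw [hG, boxProd_adj]
      right
      exact ⟨h01.symm, rfl⟩
    have reach : ∀ x : ↥(B i), (G.induce (B i)).Reachable x ⟨((i, i), 0), corner⟩ := by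
      rintro ⟨⟨⟨a, b⟩, c⟩, hmem⟩
      simp only [hB, Set.mem_setOf_eq] at hmem
      rcases hmem with ⟨rfl, rfl⟩ | ⟨rfl, rfl⟩
      · rcases le_or_gt (a : ℕ) (b : ℕ) with h | h
        · exact row ((b : ℕ) - a) b (Or.inl (by omega))
        · exact row ((a : ℕ) - b) b (Or.inr (by omega))
      · refine Reachable.trans ?_ link.reachable
        rcases le_or_gt (b : ℕ) (a : ℕ) with h | h
        · exact col ((a : ℕ) - b) a (Or.inl (by omega))
        · exact col ((b : ℕ) - a) a (Or.inr (by omega))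
    have hne : Nonempty ↥(B i) := ⟨⟨((i, i), 0), corner⟩⟩
    exact Connected.mk (fun x y => (reach x).trans (reach y).symm)
  · intro i i' hne
    rw [Set.disjoint_left]
    rintro ⟨⟨a, b⟩, c⟩ hv hv'
    rcases hv with ⟨ha, hc⟩ | ⟨hb, hc⟩ <;> rcases hv' with ⟨ha', hc'⟩ | ⟨hb', hc'⟩ <;>
      first
        | (exact hne (ha ▸ ha'.symm ▸ rfl))
        | (exact absurd (hc ▸ hc'.symm ▸ rfl) (by decide))
        | (exact hne (hb ▸ hb'.symm ▸ rfl))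
        | (exact absurd (hc'.symm.trans hc) (by decide))
  · intro i i' h
    refine ⟨((i, i'), 0), Or.inl ⟨rfl, rfl⟩, ((i, i'), 1), Or.inr ⟨rfl, rfl⟩, ?_⟩
    rw [hG, boxProd_adj]
    right
    exact ⟨h01, rfl⟩
end
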